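/- arXiv:2401.16528 — 8 statements merged into one kernel-verified Lean document; each statement's English description precedes it below -/
import Mathlib

section
/- The cube-connected cycles graph CCC_n is vertex-transitive: for any two vertices there is a graph automorphism mapping one to the other. -/
/-- The cube-connected cycles graph `CCC n`: vertices are pairs of a binary
`n`-string and a cycle digit in `ZMod n`; `(x,k)` and `(y,m)` are adjacent iff
either `x = y` and `m = k ± 1` (cycle edge), or `k = m` and `x, y` differ
exactly in the `k`-th coordinate (cube edge). -/
def CCC (n : ℕ) : SimpleGraph ((Fin n → Bool) × ZMod n) :=
  SimpleGraph.fromRel (fun p q =>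
    (p.1 = q.1 ∧ (q.2 = p.2 + 1 ∨ q.2 = p.2 - 1)) ∨
    (p.2 = q.2 ∧ ∀ i : Fin n, (p.1 i ≠ q.1 i ↔ ((i : ℕ) : ZMod n) = p.2)))

section Aux

variable {n : ℕ} [NeZero n]

/-- ZMod element to Fin. -/
def zf (z : ZMod n) : Fin n := ⟨z.val, ZMod.val_lt z⟩

lemma zf_cast (z : ZMod n) : (((zf z : Fin n) : ℕ) : ZMod n) = z :=
  ZMod.natCast_rightInverse z

lemma zf_coe (j : Fin n) : zf (((j : ℕ) : ZMod n)) = j :=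
  Fin.ext (ZMod.val_natCast_of_lt j.isLt)

/-- Rotation of indices by `t`. -/
def rotEquiv (t : ZMod n) : Fin n ≃ Fin n where
  toFun j := zf (((j : ℕ) : ZMod n) + t)
  invFun j := zf (((j : ℕ) : ZMod n) - t)
  left_inv j := by dsimp only; rw [zf_cast, add_sub_cancel_right, zf_coe]
  right_inv j := by dsimp only; rw [zf_cast, sub_add_cancel, zf_coe]

lemma rot_cast (t : ZMod n) (j : Fin n) :
    (((rotEquiv t j : Fin n) : ℕ) : ZMod n) = ((j : ℕ) : ZMod n) + t :=
  zf_cast _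

lemma xor_right_cancel (b c d : Bool) : xor b d = xor c d ↔ b = c := by
  cases b <;> cases c <;> cases d <;> simp

lemma xor_xor_right (b d : Bool) : xor (xor b d) d = b := by
  cases b <;> cases d <;> simp

/-- The automorphism of the vertex set: rotate the cycle index by `t`,
rotate the coordinates correspondingly, and XOR with the mask `a`. -/
def ccAuto (t : ZMod n) (a : Fin n → Bool) :
    ((Fin n → Bool) × ZMod n) ≃ ((Fin n → Bool) × ZMod n) where
  toFun p := (fun i => xor (p.1 ((rotEquiv t).symm i)) (a i), p.2 + t)
  invFun p := (fun j => xor (p.1 (rotEquiv t j)) (a (rotEquiv t j)), p.2 - t)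
  left_inv p := by
    ext j
    · simp [Equiv.symm_apply_apply, xor_xor_right]
    · simp
  right_inv p := by
    ext i
    · simp [Equiv.apply_symm_apply, xor_xor_right]
    · simp

lemma ccAuto_rel (t : ZMod n) (a : Fin n → Bool)
    (p q : (Fin n → Bool) × ZMod n) :
    (((ccAuto t a p).1 = (ccAuto t a q).1 ∧
        ((ccAuto t a q).2 = (ccAuto t a p).2 + 1 ∨
          (ccAuto t a q).2 = (ccAuto t a p).2 - 1)) ∨
      ((ccAuto t a p).2 = (ccAuto t a q).2 ∧
        ∀ i : Fin n, ((ccAuto t a p).1 i ≠ (ccAuto t a q).1 i ↔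
          ((i : ℕ) : ZMod n) = (ccAuto t a p).2))) ↔
    ((p.1 = q.1 ∧ (q.2 = p.2 + 1 ∨ q.2 = p.2 - 1)) ∨
      (p.2 = q.2 ∧ ∀ i : Fin n, (p.1 i ≠ q.1 i ↔ ((i : ℕ) : ZMod n) = p.2))) := by
  simp only [ccAuto, Equiv.coe_fn_mk]
  apply or_congr
  · apply and_congr
    · constructor
      · intro h
        funext j
        have := congrFun h (rotEquiv t j)
        rw [xor_right_cancel] at this
        simpa using this
      · intro h; rw [h]
    · constructor
      · rintro (h | h)
        · left; linear_combination h
        · right; linear_combination h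
      · rintro (h | h)
        · left; linear_combination h
        · right; linear_combination h
  · apply and_congr
    · exact add_left_inj t
    · rw [(rotEquiv t).forall_congr_right.symm]
      apply forall_congr'
      intro j
      rw [Equiv.symm_apply_apply, rot_cast]
      constructor
      · intro h
        constructor
        · intro hne
          have := (h.1 (by simpa [xor_right_cancel] using hne))
          linear_combination this
        · intro he
          have := h.2 (by rw [he])
          simpa [xor_right_cancel] using this
      · intro h
        constructor
        · intro hne
          rw [h.1 (by simpa [xor_right_cancel] using hne)]
        · intro he
          have : ((j : ℕ) : ZMod n) = p.2 := by linear_combination he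
          have := h.2 this
          simpa [xor_right_cancel] using this

end Aux

/-- CCC_n is vertex-transitive. -/
theorem CCC_vertexTransitive (n : ℕ) (hn : 3 ≤ n)
    (u v : (Fin n → Bool) × ZMod n) :
    ∃ φ : CCC n ≃g CCC n, φ u = v := by
  have : NeZero n := ⟨by omega⟩
  set t : ZMod n := v.2 - u.2 with ht
  set a : Fin n → Bool := fun i => xor (u.1 ((rotEquiv t).symm i)) (v.1 i) with ha
  refine ⟨⟨ccAuto t a, ?_⟩, ?_⟩
  · intro p q
    simp only [CCC, SimpleGraph.fromRel_adj]
    apply and_congr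
    · exact not_congr (EquivLike.injective (ccAuto t a)).eq_iff
    · exact or_congr (ccAuto_rel t a p q) (ccAuto_rel t a q p)
  · show ccAuto t a u = v
    ext i
    · simp only [ccAuto, Equiv.coe_fn_mk, ha]
      cases u.1 ((rotEquiv t).symm i) <;> cases v.1 i <;> simp
    · simp [ccAuto, ht]
end

section
/- For every edge uv of the cube-connected cycles graph CCC_n, there exists a graph automorphism φ of CCC_n with φ(u) = v and φ(v) = u. -/
namespace CCCAux

variable {n : ℕ}

/-- The underlying relation of `CCC n`. -/
def R (n : ℕ) (p q : (Fin n → Bool) × ZMod n) : Prop :=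
  (p.1 = q.1 ∧ (q.2 = p.2 + 1 ∨ q.2 = p.2 - 1)) ∨
  (p.2 = q.2 ∧ ∀ i : Fin n, (p.1 i ≠ q.1 i ↔ ((i : ℕ) : ZMod n) = p.2))

lemma adj_iff (p q : (Fin n → Bool) × ZMod n) :
    (CCC n).Adj p q ↔ p ≠ q ∧ (R n p q ∨ R n q p) :=
  SimpleGraph.fromRel_adj _ p q

/-- Build a graph automorphism of `CCC n` from an involution that preserves `R`. -/
def mkIso (f : (Fin n → Bool) × ZMod n → (Fin n → Bool) × ZMod n)
    (hf : Function.Involutive f)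
    (hR : ∀ p q, R n (f p) (f q) ↔ R n p q) : CCC n ≃g CCC n where
  toEquiv := hf.toPerm f
  map_rel_iff' := by
    intro p q
    simp only [Equiv.coe_fn_mk, Function.Involutive.coe_toPerm, adj_iff, hR,
      (hf.injective).ne_iff]

lemma xor_ne_xor (b c d : Bool) : xor b c ≠ xor b d ↔ c ≠ d := by
  cases b <;> cases c <;> cases d <;> decide

lemma xor_eq_xor (b c d : Bool) : (xor b c = xor b d) ↔ c = d := by
  cases b <;> cases c <;> cases d <;> decide

lemma xor_xor_self (b c : Bool) : xor b (xor b c) = c := by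
  cases b <;> cases c <;> rfl

lemma xor_xor_self' (b c : Bool) : xor (xor b c) b = c := by
  cases b <;> cases c <;> rfl

/-- XOR automorphism. -/
def xorIso (a : Fin n → Bool) : CCC n ≃g CCC n :=
  mkIso (fun p => (fun i => xor (a i) (p.1 i), p.2))
    (by
      intro p
      refine Prod.ext ?_ rfl
      funext i
      show xor (a i) (xor (a i) (p.1 i)) = p.1 i
      exact xor_xor_self _ _)
    (by
      intro p q
      unfold R
      dsimp only
      simp only [funext_iff, xor_eq_xor, xor_ne_xor])

section refl
variable [NeZero n]

/-- reflection on indices: `j ↦ r - j`. -/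
def τ (r : ZMod n) (j : Fin n) : Fin n := ⟨(r - ((j : ℕ) : ZMod n)).val, ZMod.val_lt _⟩

lemma cast_τ (r : ZMod n) (j : Fin n) :
    (((τ r j : Fin n) : ℕ) : ZMod n) = r - ((j : ℕ) : ZMod n) :=
  ZMod.natCast_rightInverse _

lemma τ_τ (r : ZMod n) (j : Fin n) : τ r (τ r j) = j := by
  have h1 : (((τ r (τ r j) : Fin n) : ℕ) : ZMod n) = ((j : ℕ) : ZMod n) := by
    rw [cast_τ, cast_τ]; ring
  have h2 : ((j : ℕ) : ZMod n).val = (j : ℕ) := ZMod.val_cast_of_lt j.isLt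
  have h3 : (((τ r (τ r j) : Fin n) : ℕ) : ZMod n).val = ((τ r (τ r j) : Fin n) : ℕ) :=
    ZMod.val_cast_of_lt (τ r (τ r j)).isLt
  apply Fin.ext
  rw [← h3, h1, h2]

/-- Reflection automorphism: `(y, m) ↦ (y ∘ τ r, r - m)`. -/
def reflIso (r : ZMod n) : CCC n ≃g CCC n :=
  mkIso (fun p => (fun j => p.1 (τ r j), r - p.2))
    (by
      intro p
      refine Prod.ext ?_ (by show r - (r - p.2) = p.2; ring)
      funext j
      show p.1 (τ r (τ r j)) = p.1 j
      rw [τ_τ])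
    (by
      intro p q
      unfold R
      dsimp only
      constructor
      · rintro (⟨h1, h2⟩ | ⟨h1, h2⟩)
        · refine Or.inl ⟨?_, ?_⟩
          · funext i
            have := congrFun h1 (τ r i)
            rwa [τ_τ] at this
          · rcases h2 with h | h
            · exact Or.inr (by linear_combination -h)
            · exact Or.inl (by linear_combination -h)
        · refine Or.inr ⟨by linear_combination -h1, ?_⟩
          intro i
          have := h2 (τ r i)
          rw [τ_τ, cast_τ] at this
          rw [this]
          constructor
          · intro h; linear_combination -h
          · intro h; linear_combination -h
      · rintro (⟨h1, h2⟩ | ⟨h1, h2⟩)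
        · refine Or.inl ⟨?_, ?_⟩
          · funext j; rw [h1]
          · rcases h2 with h | h
            · exact Or.inr (by linear_combination -h)
            · exact Or.inl (by linear_combination -h)
        · refine Or.inr ⟨by linear_combination -h1, ?_⟩
          intro j
          rw [h2 (τ r j), cast_τ]
          constructor
          · intro h; linear_combination -h
          · intro h; linear_combination -h)

end refl

end CCCAux

/-- every edge of CCC_n can be swapped by an automorphism. -/
theorem CCC_edge_swap (n : ℕ) (hn : 3 ≤ n) (u v : (Fin n → Bool) × ZMod n)
    (huv : (CCC n).Adj u v) :
    ∃ φ : CCC n ≃g CCC n, φ u = v ∧ φ v = u := by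
  haveI : NeZero n := ⟨by omega⟩
  rw [CCCAux.adj_iff] at huv
  obtain ⟨hne, hrel⟩ := huv
  have hcase : u.1 = v.1 ∨ u.2 = v.2 := by
    rcases hrel with (⟨h, _⟩ | ⟨h, _⟩) | (⟨h, _⟩ | ⟨h, _⟩)
    · exact Or.inl h
    · exact Or.inr h
    · exact Or.inl h.symm
    · exact Or.inr h.symm
  rcases hcase with hs | hd
  · -- cycle edge: reflection about r = u.2 + v.2, composed with a correcting xor
    set r : ZMod n := u.2 + v.2 with hr
    set a : Fin n → Bool := fun j => xor (u.1 (CCCAux.τ r j)) (u.1 j) with ha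
    refine ⟨(CCCAux.reflIso r).trans (CCCAux.xorIso a), ?_, ?_⟩
    · show ((fun i => xor (a i) (u.1 (CCCAux.τ r i))), r - u.2) = v
      refine Prod.ext ?_ (by show u.2 + v.2 - u.2 = v.2; ring)
      funext i
      show xor (xor (u.1 (CCCAux.τ r i)) (u.1 i)) (u.1 (CCCAux.τ r i)) = v.1 i
      rw [← hs]
      exact CCCAux.xor_xor_self' _ _
    · show ((fun i => xor (a i) (v.1 (CCCAux.τ r i))), r - v.2) = u
      refine Prod.ext ?_ (by show u.2 + v.2 - v.2 = u.2; ring)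
      funext i
      show xor (xor (u.1 (CCCAux.τ r i)) (u.1 i)) (v.1 (CCCAux.τ r i)) = u.1 i
      rw [← hs]
      exact CCCAux.xor_xor_self' _ _
  · -- cube edge: xor by u.1 ⊕ v.1
    refine ⟨CCCAux.xorIso (fun i => xor (u.1 i) (v.1 i)), ?_, ?_⟩
    · refine Prod.ext ?_ hd
      funext i
      show xor (xor (u.1 i) (v.1 i)) (u.1 i) = v.1 i
      cases u.1 i <;> cases v.1 i <;> rfl
    · refine Prod.ext ?_ hd.symm
      funext i
      show xor (xor (u.1 i) (v.1 i)) (v.1 i) = u.1 i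
      cases u.1 i <;> cases v.1 i <;> rfl
end

section
/- The cube-connected cycles graph CCC_n is distance-balanced for all n ≥ 3. -/
/-!
Every edge of `CCC n` is reversed by a graph automorphism, and an automorphism swapping `u` and `v`
maps `W_{u,v}` bijectively onto `W_{v,u}`. Adding a constant vector `c` to the bit string,
`(x, k) ↦ (x + c, k)`, is an automorphism, which reverses the cube edges. Reflecting the cycle,
`(x, k) ↦ (x ∘ σ, s - k)` where `σ` reflects the bit positions by `i ↦ s - i`, is an automorphism
too; with `s = k + m` it exchanges the levels of a cycle edge `(x, k) ~ (x, m)`, and a subsequent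
translation restores the bit string.
-/

open Function

namespace SimpleGraph

variable {V W : Type*} {G : SimpleGraph V} {H : SimpleGraph W}

theorem Hom.edist_map_le (f : G →g H) (u v : V) : H.edist (f u) (f v) ≤ G.edist u v := by
  rw [edist_eq_sInf (G := G)]
  refine le_sInf ?_
  rintro _ ⟨p, rfl⟩
  simpa using edist_le (p.map f)

theorem Iso.edist_map (φ : G ≃g H) (u v : V) : H.edist (φ u) (φ v) = G.edist u v := by
  refine le_antisymm (Hom.edist_map_le φ.toHom u v) ?_
  simpa using Hom.edist_map_le φ.symm.toHom (φ u) (φ v)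

theorem Iso.dist_map (φ : G ≃g H) (u v : V) : H.dist (φ u) (φ v) = G.dist u v := by
  simp only [dist, φ.edist_map]

theorem card_dist_lt_eq_of_iso_swap (φ : G ≃g G) {u v : V} (hu : φ u = v) (hv : φ v = u) :
    Nat.card {z | G.dist z u < G.dist z v} = Nat.card {z | G.dist z v < G.dist z u} := by
  refine Nat.card_congr (φ.toEquiv.subtypeEquiv fun z => ?_)
  change G.dist z u < G.dist z v ↔ G.dist (φ z) v < G.dist (φ z) u
  rw [← φ.dist_map z u, ← φ.dist_map z v, hu, hv]

def fromRelIsoOfInvolutive {r : V → V → Prop} (f : V → V) (hf : Involutive f)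
    (hr : ∀ a b, r a b → r (f a) (f b)) : fromRel r ≃g fromRel r :=
  have hadj : ∀ {a b}, (fromRel r).Adj a b → (fromRel r).Adj (f a) (f b) := by
    intro a b hab
    rw [fromRel_adj] at hab ⊢
    exact ⟨hf.injective.ne hab.1, hab.2.imp (hr a b) (hr b a)⟩
  { toEquiv := hf.toPerm f
    map_rel_iff' := fun {a b} =>
      ⟨fun h => by simpa only [hf a, hf b] using hadj (a := f a) (b := f b) h, hadj⟩ }

end SimpleGraph

theorem ZMod.natCast_fin_injective (n : ℕ) : Injective fun i : Fin n => ((i : ℕ) : ZMod n) := by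
  intro i j h
  have := congrArg ZMod.val h
  simp only [ZMod.val_cast_of_lt i.isLt, ZMod.val_cast_of_lt j.isLt] at this
  exact Fin.ext this

namespace CCC

open SimpleGraph

variable {n : ℕ}

theorem fst_eq_or_snd_eq_of_adj {u v : (Fin n → Bool) × ZMod n} (h : (CCC n).Adj u v) :
    u.1 = v.1 ∨ u.2 = v.2 := by
  rw [CCC, fromRel_adj] at h
  rcases h.2 with (⟨h1, -⟩ | ⟨h2, -⟩) | (⟨h1, -⟩ | ⟨h2, -⟩)
  exacts [.inl h1, .inr h2, .inl h1.symm, .inr h2.symm]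

def translate (c : Fin n → Bool) : CCC n ≃g CCC n :=
  fromRelIsoOfInvolutive (fun z => (fun i => z.1 i ^^ c i, z.2))
    (fun z => by simp)
    (by
      rintro p q (⟨hx, hk⟩ | ⟨hk, hd⟩)
      · exact .inl ⟨by rw [hx], hk⟩
      · exact .inr ⟨hk, fun i => by simpa only [ne_eq, Bool.xor_left_inj] using hd i⟩)

@[simp]
theorem translate_apply (c : Fin n → Bool) (z : (Fin n → Bool) × ZMod n) :
    translate c z = (fun i => z.1 i ^^ c i, z.2) :=
  rfl

def reflectIndex (s : ZMod n) (i : Fin n) : Fin n :=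
  ⟨(s - i).val, haveI := NeZero.of_pos i.pos; ZMod.val_lt _⟩

theorem natCast_reflectIndex (s : ZMod n) (i : Fin n) :
    ((reflectIndex s i : ℕ) : ZMod n) = s - i :=
  haveI := NeZero.of_pos i.pos
  ZMod.natCast_zmod_val _

theorem reflectIndex_involutive (s : ZMod n) : Involutive (reflectIndex s) := fun i =>
  ZMod.natCast_fin_injective n (by simp only [natCast_reflectIndex, sub_sub_cancel])

def reflect (s : ZMod n) : CCC n ≃g CCC n :=
  fromRelIsoOfInvolutive (fun z => (fun i => z.1 (reflectIndex s i), s - z.2))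
    (fun z => by simp [reflectIndex_involutive s _])
    (by
      rintro p q (⟨hx, hk⟩ | ⟨hk, hd⟩)
      · refine .inl ⟨by rw [hx], ?_⟩
        rcases hk with hk | hk <;> rw [hk]
        exacts [.inr (by ring), .inl (by ring)]
      · refine .inr ⟨by rw [hk], fun i => ?_⟩
        rw [hd, natCast_reflectIndex, sub_eq_iff_eq_add, ← sub_eq_iff_eq_add', eq_comm])

@[simp]
theorem reflect_apply (s : ZMod n) (z : (Fin n → Bool) × ZMod n) :
    reflect s z = (fun i => z.1 (reflectIndex s i), s - z.2) :=
  rfl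

theorem exists_swap_of_snd_eq {u v : (Fin n → Bool) × ZMod n} (h : u.2 = v.2) :
    ∃ φ : CCC n ≃g CCC n, φ u = v ∧ φ v = u := by
  refine ⟨translate fun i => u.1 i ^^ v.1 i, ?_, ?_⟩ <;>
    ext1 <;> simp [h, Bool.xor_comm (u.1 _)]

theorem exists_swap_of_fst_eq {u v : (Fin n → Bool) × ZMod n} (h : u.1 = v.1) :
    ∃ φ : CCC n ≃g CCC n, φ u = v ∧ φ v = u := by
  refine ⟨(reflect (u.2 + v.2)).trans
    (translate fun i => u.1 (reflectIndex (u.2 + v.2) i) ^^ u.1 i), ?_, ?_⟩ <;>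
    ext1 <;> simp [← h]

theorem exists_swap_of_adj {u v : (Fin n → Bool) × ZMod n} (h : (CCC n).Adj u v) :
    ∃ φ : CCC n ≃g CCC n, φ u = v ∧ φ v = u :=
  (fst_eq_or_snd_eq_of_adj h).elim exists_swap_of_fst_eq exists_swap_of_snd_eq

end CCC

theorem CCC_distanceBalanced_general (n : ℕ)
    (u v : (Fin n → Bool) × ZMod n) (huv : (CCC n).Adj u v) :
    Nat.card {z : (Fin n → Bool) × ZMod n | (CCC n).dist z u < (CCC n).dist z v}
      = Nat.card {z : (Fin n → Bool) × ZMod n | (CCC n).dist z v < (CCC n).dist z u} := by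
  obtain ⟨φ, hu, hv⟩ := CCC.exists_swap_of_adj huv
  exact SimpleGraph.card_dist_lt_eq_of_iso_swap φ hu hv

/-- CCC_n is distance-balanced for all n ≥ 3. -/
theorem CCC_distanceBalanced (n : ℕ) (hn : 3 ≤ n)
    (u v : (Fin n → Bool) × ZMod n) (huv : (CCC n).Adj u v) :
    Nat.card {z : (Fin n → Bool) × ZMod n | (CCC n).dist z u < (CCC n).dist z v}
      = Nat.card {z : (Fin n → Bool) × ZMod n | (CCC n).dist z v < (CCC n).dist z u} :=
  CCC_distanceBalanced_general n u v huv
end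

section
/- Let uv be a cube edge of CCC_n, i.e. u = (x,k) and v = (y,k) where x and y differ exactly in coordinate k. Then |W_{u,v}| = |W_{v,u}| = n * 2^{n-1}; equivalently, no vertex of CCC_n is equidistant from u and v. -/
open SimpleGraph

namespace CCC

variable {n : ℕ}

lemma natCast_val_inj [NeZero n] {i j : Fin n} :
    ((i : ℕ) : ZMod n) = ((j : ℕ) : ZMod n) ↔ i = j := by
  refine ⟨fun h => Fin.ext ?_, fun h => h ▸ rfl⟩
  simpa [ZMod.val_natCast_of_lt i.isLt, ZMod.val_natCast_of_lt j.isLt] using congrArg ZMod.val h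

lemma exists_fin_natCast_eq [NeZero n] (k : ZMod n) : ∃ i : Fin n, ((i : ℕ) : ZMod n) = k :=
  ⟨⟨k.val, k.val_lt⟩, ZMod.natCast_zmod_val k⟩

def flip (i : Fin n) (p : (Fin n → Bool) × ZMod n) : (Fin n → Bool) × ZMod n :=
  (Function.update p.1 i (!p.1 i), p.2)

lemma flip_involutive (i : Fin n) : Function.Involutive (flip i) := by
  intro p
  refine Prod.ext (funext fun j => ?_) rfl
  by_cases hj : j = i <;> simp [flip, hj]

lemma flip_fst_ne_flip_fst_iff (i : Fin n) (p q : (Fin n → Bool) × ZMod n) (j : Fin n) :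
    (flip i p).1 j ≠ (flip i q).1 j ↔ p.1 j ≠ q.1 j := by
  by_cases hj : j = i <;> simp [flip, hj]

lemma flip_fst_eq_flip_fst_iff (i : Fin n) (p q : (Fin n → Bool) × ZMod n) :
    (flip i p).1 = (flip i q).1 ↔ p.1 = q.1 := by
  simpa only [funext_iff, not_ne_iff] using
    forall_congr' fun j => (flip_fst_ne_flip_fst_iff i p q j).not

lemma flip_eq_iff (i : Fin n) (p q : (Fin n → Bool) × ZMod n) :
    flip i p = q ↔ p.2 = q.2 ∧ ∀ j, p.1 j ≠ q.1 j ↔ j = i := by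
  rw [Prod.ext_iff, and_comm, funext_iff]
  refine and_congr_right' (forall_congr' fun j => ?_)
  by_cases hj : j = i
  · subst hj
    cases hp : p.1 j <;> cases hq : q.1 j <;> simp [flip, hp]
  · simp [flip, hj]

lemma adj_flip_iff (i : Fin n) {p q : (Fin n → Bool) × ZMod n} :
    (CCC n).Adj (flip i p) (flip i q) ↔ (CCC n).Adj p q := by
  simp only [CCC, fromRel_adj, (flip_involutive i).injective.ne_iff, flip_fst_eq_flip_fst_iff,
    flip_fst_ne_flip_fst_iff]
  rfl

def flipIso (i : Fin n) : CCC n ≃g CCC n where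
  toEquiv := (flip_involutive i).toPerm
  map_rel_iff' := adj_flip_iff i

lemma cube_of_adj {p q : (Fin n → Bool) × ZMod n} (h : (CCC n).Adj p q) (hpq : p.1 ≠ q.1) :
    p.2 = q.2 ∧ ∀ j : Fin n, (p.1 j ≠ q.1 j ↔ ((j : ℕ) : ZMod n) = p.2) := by
  rw [CCC, fromRel_adj] at h
  rcases h.2 with (⟨h1, -⟩ | h) | (⟨h1, -⟩ | ⟨h1, h2⟩)
  · exact absurd h1 hpq
  · exact h
  · exact absurd h1.symm hpq
  · exact ⟨h1.symm, fun j => ne_comm.trans ((h2 j).trans (by rw [h1]))⟩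

lemma flip_eq_of_cube [NeZero n] {i : Fin n} {p q : (Fin n → Bool) × ZMod n}
    (hi : ((i : ℕ) : ZMod n) = p.2)
    (h : p.2 = q.2 ∧ ∀ j : Fin n, (p.1 j ≠ q.1 j ↔ ((j : ℕ) : ZMod n) = p.2)) :
    flip i p = q :=
  (flip_eq_iff i p q).2 ⟨h.1, fun j => (h.2 j).trans (hi ▸ natCast_val_inj)⟩

lemma flip_eq_of_adj [NeZero n] {i : Fin n} {p q : (Fin n → Bool) × ZMod n}
    (h : (CCC n).Adj p q) (hi : p.1 i ≠ q.1 i) : flip i p = q :=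
  have hcube := cube_of_adj h fun e => hi (congrFun e i)
  flip_eq_of_cube ((hcube.2 i).1 hi) hcube

lemma exists_walk_flip_of_fst_ne [NeZero n] (i : Fin n) {a b : (Fin n → Bool) × ZMod n}
    (W : (CCC n).Walk a b) (hab : a.1 i ≠ b.1 i) :
    ∃ W' : (CCC n).Walk a (flip i b), W'.length + 1 = W.length := by
  induction W with
  | nil => exact absurd rfl hab
  | @cons u c b h W ih =>
    by_cases huc : u.1 i = c.1 i
    · obtain ⟨W', hW'⟩ := ih (huc ▸ hab)
      exact ⟨W'.cons h, by simp [hW']⟩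
    · have hc : (flipIso i).toHom c = u := by
        rw [← flip_eq_of_adj h huc]
        exact flip_involutive i u
      have hb : (flipIso i).toHom b = flip i b := rfl
      exact ⟨(W.map (flipIso i).toHom).copy hc hb, by simp⟩

lemma reachable_add_one (w : Fin n → Bool) (m : ZMod n) : (CCC n).Reachable (w, m) (w, m + 1) := by
  by_cases h : (w, m) = (w, m + 1)
  · exact h ▸ Reachable.refl _
  · exact Adj.reachable (by rw [CCC, fromRel_adj]; exact ⟨h, Or.inl (Or.inl ⟨rfl, Or.inl rfl⟩)⟩)

lemma reachable_of_fst_eq [NeZero n] (w : Fin n → Bool) (m m' : ZMod n) :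
    (CCC n).Reachable (w, m) (w, m') := by
  have step : ∀ d : ℕ, (CCC n).Reachable (w, m) (w, m + d) := by
    intro d
    induction d with
    | zero => simp
    | succ d ih => simpa [add_assoc] using ih.trans (reachable_add_one w (m + d))
  simpa using step (m' - m).val

lemma adj_flip_self [NeZero n] (i : Fin n) (p : (Fin n → Bool) × ZMod n)
    (hi : ((i : ℕ) : ZMod n) = p.2) : (CCC n).Adj p (flip i p) := by
  rw [CCC, fromRel_adj]
  refine ⟨fun h => ?_, Or.inl (Or.inr ⟨rfl, fun j => ?_⟩)⟩
  · simpa [flip] using congrFun (congrArg Prod.fst h) i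
  · rw [← hi, natCast_val_inj]
    by_cases hj : j = i <;> simp [flip, hj]

lemma reachable_flip [NeZero n] (i : Fin n) (p : (Fin n → Bool) × ZMod n) :
    (CCC n).Reachable p (flip i p) :=
  ((reachable_of_fst_eq p.1 p.2 i).trans (adj_flip_self i _ rfl).reachable).trans
    (reachable_of_fst_eq _ _ p.2)

lemma reachable_of_forall_notMem_fst_eq [NeZero n] (s : Finset (Fin n)) :
    ∀ p q : (Fin n → Bool) × ZMod n, (∀ j ∉ s, p.1 j = q.1 j) → (CCC n).Reachable p q := by
  induction s using Finset.induction with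
  | empty =>
    rintro ⟨w, m⟩ ⟨w', m'⟩ h
    obtain rfl : w = w' := funext fun j => h j (Finset.notMem_empty j)
    exact reachable_of_fst_eq w m m'
  | insert i s _ ih =>
    intro p q h
    have agree : ∀ j ∉ s, j ≠ i → p.1 j = q.1 j := fun j hj hji => h j (by simp [hji, hj])
    by_cases hpq : p.1 i = q.1 i
    · refine ih p q fun j hj => ?_
      by_cases hji : j = i
      · exact hji ▸ hpq
      · exact agree j hj hji
    · refine (reachable_flip i p).trans (ih _ q fun j hj => ?_)
      by_cases hji : j = i
      · subst hji
        cases h1 : p.1 j <;> cases h2 : q.1 j <;> simp_all [flip]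
      · simpa [flip, hji] using agree j hj hji

lemma connected [NeZero n] : (CCC n).Connected :=
  (connected_iff _).2 ⟨fun p q => reachable_of_forall_notMem_fst_eq Finset.univ p q (by simp),
    inferInstance⟩

lemma dist_flip_lt [NeZero n] (i : Fin n) {z p : (Fin n → Bool) × ZMod n} (hz : z.1 i ≠ p.1 i) :
    (CCC n).dist z (flip i p) < (CCC n).dist z p := by
  obtain ⟨W, hW⟩ := (connected.preconnected z p).exists_walk_length_eq_dist
  obtain ⟨W', hW'⟩ := exists_walk_flip_of_fst_ne i W hz
  exact (dist_le W').trans_lt (by omega)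

lemma dist_lt_dist_flip_iff [NeZero n] (i : Fin n) (z p : (Fin n → Bool) × ZMod n) :
    (CCC n).dist z p < (CCC n).dist z (flip i p) ↔ z.1 i = p.1 i := by
  refine ⟨fun h => by_contra fun hz => (dist_flip_lt i hz).not_gt h, fun hz => ?_⟩
  have := dist_flip_lt i (z := z) (p := flip i p) (by simp [flip, hz])
  rwa [flip_involutive] at this

lemma dist_ne_dist_flip [NeZero n] (i : Fin n) (z p : (Fin n → Bool) × ZMod n) :
    (CCC n).dist z p ≠ (CCC n).dist z (flip i p) := by
  by_cases hz : z.1 i = p.1 i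
  · exact ((dist_lt_dist_flip_iff i z p).2 hz).ne
  · exact (dist_flip_lt i hz).ne'

lemma card_setOf_fst_apply_eq (i : Fin n) (b : Bool) :
    Nat.card {z : (Fin n → Bool) × ZMod n | z.1 i = b} = n * 2 ^ (n - 1) := by
  refine (Nat.card_congr (Equiv.prodSubtypeFstEquivSubtypeProd
    (p := fun w : Fin n → Bool => w i = b))).trans ?_
  rw [Nat.card_prod, Nat.card_zmod, mul_comm, Nat.card_eq_fintype_card, Fintype.card_subtype]
  have h := Fintype.card_filter_piFinset_const_eq_of_mem (Finset.univ : Finset Bool) i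
    (Finset.mem_univ b)
  rw [Fintype.piFinset_univ, Finset.card_univ, Fintype.card_bool, Fintype.card_fin] at h
  rw [h]

end CCC

/-- for a cube edge uv of CCC_n, |W_{u,v}| = |W_{v,u}| = n * 2^(n-1); equivalently no vertex is equidistant from u and v. -/
theorem CCC_cube_edge_halves (n : ℕ) (hn : 3 ≤ n) (x y : Fin n → Bool) (k : ZMod n)
    (hxy : ∀ i : Fin n, x i ≠ y i ↔ ((i : ℕ) : ZMod n) = k) :
    Nat.card {z : (Fin n → Bool) × ZMod n |
        (CCC n).dist z (x, k) < (CCC n).dist z (y, k)} = n * 2 ^ (n - 1) ∧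
    Nat.card {z : (Fin n → Bool) × ZMod n |
        (CCC n).dist z (y, k) < (CCC n).dist z (x, k)} = n * 2 ^ (n - 1) ∧
    ∀ z : (Fin n → Bool) × ZMod n, (CCC n).dist z (x, k) ≠ (CCC n).dist z (y, k) := by
  have : NeZero n := ⟨by omega⟩
  obtain ⟨i, hi⟩ := CCC.exists_fin_natCast_eq k
  have hv : CCC.flip i (x, k) = (y, k) := CCC.flip_eq_of_cube hi ⟨rfl, hxy⟩
  have hu : CCC.flip i (y, k) = (x, k) := by rw [← hv, CCC.flip_involutive]
  have half : ∀ p, Nat.card {z | (CCC n).dist z p < (CCC n).dist z (CCC.flip i p)} =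
      n * 2 ^ (n - 1) := fun p => by
    simp_rw [CCC.dist_lt_dist_flip_iff]
    exact CCC.card_setOf_fst_apply_eq i (p.1 i)
  refine ⟨?_, ?_, fun z => ?_⟩
  · rw [← hv]; exact half (x, k)
  · rw [← hu]; exact half (y, k)
  · rw [← hv]; exact CCC.dist_ne_dist_flip i z (x, k)
end

section
/- If n is even, then for every cycle edge uv of CCC_n, no vertex of CCC_n is equidistant from u and v (i.e. W_u^v = ∅). -/
section Aux

variable {n : ℕ}

lemma CCC_adj_iff (p q : (Fin n → Bool) × ZMod n) :
    (CCC n).Adj p q ↔ p ≠ q ∧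
      (((p.1 = q.1 ∧ (q.2 = p.2 + 1 ∨ q.2 = p.2 - 1)) ∨
        (p.2 = q.2 ∧ ∀ i : Fin n, (p.1 i ≠ q.1 i ↔ ((i : ℕ) : ZMod n) = p.2)))
      ∨ ((q.1 = p.1 ∧ (p.2 = q.2 + 1 ∨ p.2 = q.2 - 1)) ∨
        (q.2 = p.2 ∧ ∀ i : Fin n, (q.1 i ≠ p.1 i ↔ ((i : ℕ) : ZMod n) = q.2)))) := by
  rw [CCC, SimpleGraph.fromRel_adj]

lemma one_ne_zero_zmod (hn : 3 ≤ n) : (1 : ZMod n) ≠ 0 := by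
  haveI : Fact (1 < n) := ⟨by omega⟩
  exact one_ne_zero

lemma CCC_adj_cycle (hn : 3 ≤ n) (x : Fin n → Bool) (k : ZMod n) :
    (CCC n).Adj (x, k) (x, k + 1) := by
  rw [CCC_adj_iff]
  refine ⟨?_, Or.inl (Or.inl ⟨rfl, Or.inl rfl⟩)⟩
  simp only [ne_eq, Prod.mk.injEq, not_and]
  intro _ h
  exact one_ne_zero_zmod hn (by linear_combination -h)

lemma natCast_fin_inj (hn : 3 ≤ n) {i j : Fin n} (h : ((i : ℕ) : ZMod n) = ((j : ℕ) : ZMod n)) :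
    i = j := by
  haveI : NeZero n := ⟨by omega⟩
  have := congrArg ZMod.val h
  rw [ZMod.val_natCast_of_lt i.isLt, ZMod.val_natCast_of_lt j.isLt] at this
  exact Fin.ext this

lemma CCC_adj_cube (hn : 3 ≤ n) (x : Fin n → Bool) (i : Fin n) :
    (CCC n).Adj (x, ((i : ℕ) : ZMod n)) (Function.update x i (!x i), ((i : ℕ) : ZMod n)) := by
  rw [CCC_adj_iff]
  constructor
  · intro h
    have := congrFun (congrArg Prod.fst h) i
    simp only [Function.update_self] at this
    exact (Bool.not_ne_self (x i)) this.symm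
  · refine Or.inl (Or.inr ⟨rfl, fun j => ?_⟩)
    dsimp only
    rcases eq_or_ne j i with rfl | hji
    · simp [Function.update_self, Bool.not_ne_self]
    · rw [Function.update_of_ne hji]
      simp only [ne_eq, not_true_eq_false, false_iff]
      intro h
      exact hji (natCast_fin_inj hn h)

/-- Parity coloring. -/
def ccol (h2 : (2 : ℕ) ∣ n) (p : (Fin n → Bool) × ZMod n) : ZMod 2 :=
  (∑ i : Fin n, cond (p.1 i) 1 0) + ZMod.castHom h2 (ZMod 2) p.2

lemma zmod2_flip : ∀ a b : ZMod 2, a = b + 1 → b = a + 1 := by decide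

lemma ccol_adj (hn : 3 ≤ n) (h2 : (2 : ℕ) ∣ n) {p q : (Fin n → Bool) × ZMod n}
    (h : (CCC n).Adj p q) : ccol h2 q = ccol h2 p + 1 := by
  haveI : NeZero n := ⟨by omega⟩
  have cube : ∀ a b : (Fin n → Bool) × ZMod n,
      (a.2 = b.2 ∧ ∀ i : Fin n, (a.1 i ≠ b.1 i ↔ ((i : ℕ) : ZMod n) = a.2)) →
      ccol h2 b = ccol h2 a + 1 := by
    rintro ⟨xa, ka⟩ ⟨xb, kb⟩ ⟨h1, hiff⟩
    dsimp only at h1 hiff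
    subst h1
    obtain ⟨i0, hcast⟩ : ∃ i0 : Fin n, ((i0 : ℕ) : ZMod n) = ka :=
      ⟨⟨ka.val, ZMod.val_lt ka⟩, by rw [ZMod.natCast_val, ZMod.cast_id]⟩
    have hb : xb = Function.update xa i0 (!xa i0) := by
      funext j
      rcases eq_or_ne j i0 with rfl | hj
      · have hne := (hiff j).mpr hcast
        rw [Function.update_self]
        cases hxa : xa j <;> cases hxb : xb j <;> simp_all
      · rw [Function.update_of_ne hj]
        have : ¬ (xa j ≠ xb j) := by
          rw [hiff j]
          intro hc
          exact hj (natCast_fin_inj hn (hc.trans hcast.symm))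
        exact (not_not.mp this).symm
    subst hb
    show (∑ i : Fin n, cond (Function.update xa i0 (!xa i0) i) 1 0) + _
        = ((∑ i : Fin n, cond (xa i) 1 0) + _) + 1
    rw [← Finset.add_sum_erase Finset.univ
        (fun i => cond (Function.update xa i0 (!xa i0) i) 1 0) (Finset.mem_univ i0),
      ← Finset.add_sum_erase Finset.univ (fun i => cond (xa i) 1 0) (Finset.mem_univ i0)]
    have hrest : (∑ i ∈ Finset.univ.erase i0, cond (Function.update xa i0 (!xa i0) i) 1 0 : ZMod 2)
        = ∑ i ∈ Finset.univ.erase i0, cond (xa i) 1 0 := by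
      refine Finset.sum_congr rfl fun j hj => ?_
      rw [Function.update_of_ne (Finset.ne_of_mem_erase hj)]
    rw [hrest, Function.update_self]
    have hflip : (cond (!xa i0) 1 0 : ZMod 2) = cond (xa i0) 1 0 + 1 := by
      cases xa i0 <;> decide
    rw [hflip]; ring
  have cyc : ∀ a b : (Fin n → Bool) × ZMod n,
      (a.1 = b.1 ∧ (b.2 = a.2 + 1 ∨ b.2 = a.2 - 1)) →
      ccol h2 b = ccol h2 a + 1 := by
    rintro ⟨xa, ka⟩ ⟨xb, kb⟩ ⟨h1, h2'⟩
    dsimp only at h1 h2'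
    subst h1
    show (∑ i : Fin n, cond (xa i) 1 0) + ZMod.castHom h2 (ZMod 2) kb
        = ((∑ i : Fin n, cond (xa i) 1 0) + ZMod.castHom h2 (ZMod 2) ka) + 1
    have hneg : (-1 : ZMod 2) = 1 := by decide
    rcases h2' with rfl | rfl
    · simp only [map_add, map_one]; ring
    · rw [map_sub, map_one, sub_eq_add_neg, hneg]; ring
  rw [CCC_adj_iff] at h
  rcases h.2 with (h' | h') | (h' | h')
  · exact cyc _ _ h'
  · exact cube _ _ h'
  · exact zmod2_flip _ _ (cyc _ _ h')
  · exact zmod2_flip _ _ (cube _ _ h')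

lemma ccol_walk (hn : 3 ≤ n) (h2 : (2 : ℕ) ∣ n) {p q : (Fin n → Bool) × ZMod n}
    (w : (CCC n).Walk p q) : ccol h2 q = ccol h2 p + (w.length : ZMod 2) := by
  induction w with
  | nil => simp
  | cons hadj w ih =>
    rw [SimpleGraph.Walk.length_cons, ih]
    have := ccol_adj hn h2 hadj
    push_cast
    rw [this]; ring

lemma reach_cycle (hn : 3 ≤ n) (x : Fin n → Bool) (k : ZMod n) (t : ℕ) :
    (CCC n).Reachable (x, k) (x, k + (t : ZMod n)) := by
  induction t with
  | zero => simpa using SimpleGraph.Reachable.refl (x, k)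
  | succ t ih =>
    refine ih.trans ?_
    have : (((t : ℕ) + 1 : ℕ) : ZMod n) = (t : ZMod n) + 1 := by push_cast; ring
    rw [this, ← add_assoc]
    exact (CCC_adj_cycle hn x (k + (t : ZMod n))).reachable

lemma reach_same (hn : 3 ≤ n) (x : Fin n → Bool) (k m : ZMod n) :
    (CCC n).Reachable (x, k) (x, m) := by
  haveI : NeZero n := ⟨by omega⟩
  have := reach_cycle hn x k (m - k).val
  rwa [ZMod.natCast_val, ZMod.cast_id, add_sub_cancel] at this

lemma reach_all (hn : 3 ≤ n) (s : Finset (Fin n)) :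
    ∀ (x y : Fin n → Bool) (k m : ZMod n), (∀ i, x i ≠ y i → i ∈ s) →
      (CCC n).Reachable (x, k) (y, m) := by
  induction s using Finset.induction with
  | empty =>
    intro x y k m hsub
    have : x = y := by
      funext i
      by_contra hc
      exact absurd (hsub i hc) (Finset.notMem_empty i)
    subst this
    exact reach_same hn x k m
  | @insert a s ha ih =>
    intro x y k m hsub
    by_cases hxy : x a = y a
    · exact ih x y k m fun i hi => by
        rcases Finset.mem_insert.mp (hsub i hi) with rfl | h
        · exact absurd hxy hi
        · exact h
    · have step1 : (CCC n).Reachable (x, k) (x, ((a : ℕ) : ZMod n)) := reach_same hn x k _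
      have step2 : (CCC n).Reachable (x, ((a : ℕ) : ZMod n))
          (Function.update x a (!x a), ((a : ℕ) : ZMod n)) :=
        (CCC_adj_cube hn x a).reachable
      have hupd : Function.update x a (!x a) = Function.update x a (y a) := by
        have : y a = !x a := by
          cases hx : x a <;> cases hy : y a <;> simp_all
        rw [this]
      have step3 : (CCC n).Reachable (Function.update x a (!x a), ((a : ℕ) : ZMod n)) (y, m) := by
        rw [hupd]
        refine ih _ y _ m fun i hi => ?_
        rcases eq_or_ne i a with rfl | hia
        · rw [Function.update_self] at hi; exact absurd rfl hi
        · rw [Function.update_of_ne hia] at hi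
          rcases Finset.mem_insert.mp (hsub i hi) with rfl | h
          · exact absurd rfl hia
          · exact h
      exact (step1.trans step2).trans step3

lemma CCC_preconnected (hn : 3 ≤ n) : (CCC n).Preconnected := by
  rintro ⟨x, k⟩ ⟨y, m⟩
  exact reach_all hn Finset.univ x y k m fun i _ => Finset.mem_univ i

end Aux

/-- if n is even, then for every cycle edge uv of CCC_n no vertex is equidistant from u and v. -/
theorem CCC_even_no_equidistant (n : ℕ) (hn : 3 ≤ n) (heven : Even n)
    (x : Fin n → Bool) (k m : ZMod n) (hm : m = k + 1 ∨ m = k - 1) :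
    ∀ z : (Fin n → Bool) × ZMod n,
      (CCC n).dist z (x, k) ≠ (CCC n).dist z (x, m) := by
  intro z heq
  have h2 : (2 : ℕ) ∣ n := heven.two_dvd
  -- (x,k) and (x,m) are adjacent
  have hadj : (CCC n).Adj (x, k) (x, m) := by
    rw [CCC_adj_iff]
    constructor
    · intro hc
      have hkm : k = m := congrArg Prod.snd hc
      rcases hm with rfl | rfl
      · exact one_ne_zero_zmod hn (by linear_combination -hkm)
      · exact one_ne_zero_zmod hn (by linear_combination hkm)
    · exact Or.inl (Or.inl ⟨rfl, hm⟩)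
  have hr1 : (CCC n).Reachable z (x, k) := CCC_preconnected hn z (x, k)
  have hr2 : (CCC n).Reachable z (x, m) := CCC_preconnected hn z (x, m)
  obtain ⟨w1, hw1⟩ := hr1.exists_walk_length_eq_dist
  obtain ⟨w2, hw2⟩ := hr2.exists_walk_length_eq_dist
  have e1 := ccol_walk hn h2 w1
  have e2 := ccol_walk hn h2 w2
  rw [hw1] at e1
  rw [hw2] at e2
  rw [heq] at e1
  have : ccol h2 (x, k) = ccol h2 (x, m) := by rw [e1, e2]
  have hflip := ccol_adj hn h2 hadj
  rw [this] at hflip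
  exact one_ne_zero (left_eq_add.mp hflip)
end

section
/- For a cycle edge uv of CCC_n, the set of vertices equidistant from u and v is empty if and only if n is even. -/
namespace CCCaux

variable {n : ℕ}

/-- cycle pseudo-distance -/
def d0 (n : ℕ) (z : ZMod n) : ℕ := min z.val (n - z.val)

lemma d0_neg [NeZero n] (z : ZMod n) : d0 n (-z) = d0 n z := by
  by_cases h : z = 0
  · simp [h]
  · have hv : (-z).val = n - z.val := by rw [ZMod.neg_val]; simp [h]
    have := z.val_lt
    have hz : z.val ≠ 0 := by simpa [ZMod.val_eq_zero] using h
    unfold d0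
    omega

lemma d0_add_one_le [NeZero n] (z : ZMod n) : d0 n (z + 1) ≤ d0 n z + 1 := by
  have h1 : (z + 1).val = (z.val + (1 : ZMod n).val) % n := ZMod.val_add z 1
  have hlt := z.val_lt
  have hn : 1 ≤ n := Nat.one_le_iff_ne_zero.2 (NeZero.ne n)
  by_cases h2 : n = 1
  · subst h2; unfold d0; omega
  · haveI : Fact (1 < n) := ⟨by omega⟩
    have hv1 : (1 : ZMod n).val = 1 := ZMod.val_one n
    rw [hv1] at h1
    by_cases h3 : z.val + 1 < n
    · rw [Nat.mod_eq_of_lt h3] at h1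
      unfold d0; omega
    · have : z.val + 1 = n := by omega
      rw [this, Nat.mod_self] at h1
      unfold d0; omega

lemma d0_sub_one_le [NeZero n] (z : ZMod n) : d0 n (z - 1) ≤ d0 n z + 1 := by
  have : z - 1 = -(-z + 1) := by ring
  rw [this, d0_neg, ← d0_neg z]
  exact d0_add_one_le _

lemma adj_cases {p q : (Fin n → Bool) × ZMod n} (h : (CCC n).Adj p q) :
    q.2 = p.2 ∨ q.2 = p.2 + 1 ∨ q.2 = p.2 - 1 := by
  rw [CCC, SimpleGraph.fromRel_adj] at h
  rcases h.2 with (⟨-, h⟩ | ⟨h, -⟩) | (⟨-, h⟩ | ⟨h, -⟩)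
  · tauto
  · exact Or.inl h.symm
  · rcases h with h | h
    · right; right; rw [h]; ring
    · right; left; rw [h]; ring
  · exact Or.inl h

/-- lower bound: any walk is at least the cycle distance of second coords. -/
lemma d0_le_walk_length [NeZero n] {p q : (Fin n → Bool) × ZMod n}
    (w : (CCC n).Walk p q) : d0 n (q.2 - p.2) ≤ w.length := by
  induction w with
  | nil => simp [d0]
  | @cons a b c hadj w ih =>
    rw [SimpleGraph.Walk.length_cons]
    rcases adj_cases hadj with h2 | h2 | h2
    · have : c.2 - a.2 = c.2 - b.2 := by rw [h2]
      rw [this]; omega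
    · have : c.2 - a.2 = (c.2 - b.2) + 1 := by rw [h2]; ring
      rw [this]
      have := d0_add_one_le (n := n) (c.2 - b.2)
      omega
    · have : c.2 - a.2 = (c.2 - b.2) - 1 := by rw [h2]; ring
      rw [this]
      have := d0_sub_one_le (n := n) (c.2 - b.2)
      omega

lemma one_ne_zero' (hn : 3 ≤ n) : (1 : ZMod n) ≠ 0 := by
  haveI : Fact (1 < n) := ⟨by omega⟩
  exact one_ne_zero

lemma adj_cycle (hn : 3 ≤ n) (x : Fin n → Bool) (a : ZMod n) :
    (CCC n).Adj (x, a) (x, a + 1) := by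
  rw [CCC, SimpleGraph.fromRel_adj]
  refine ⟨?_, Or.inl (Or.inl ⟨rfl, Or.inl rfl⟩)⟩
  simp only [ne_eq, Prod.mk.injEq, not_and]
  intro _ h
  exact one_ne_zero' hn (add_eq_left.mp h.symm)

end CCCaux

namespace CCCaux2
open CCCaux

variable {n : ℕ}

lemma adj_cycle' (hn : 3 ≤ n) (x : Fin n → Bool) (a : ZMod n) :
    (CCC n).Adj (x, a) (x, a - 1) := by
  have h := (adj_cycle hn x (a - 1)).symm
  rwa [sub_add_cancel] at h

lemma exists_walk_add (hn : 3 ≤ n) (x : Fin n → Bool) (a : ZMod n) (t : ℕ) :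
    ∃ w : (CCC n).Walk (x, a) (x, a + (t : ZMod n)), w.length = t := by
  induction t with
  | zero =>
    exact ⟨(SimpleGraph.Walk.nil).copy rfl (by simp), by simp⟩
  | succ t ih =>
    obtain ⟨w, hw⟩ := ih
    refine ⟨(w.concat (adj_cycle hn x _)).copy rfl (by push_cast; ring_nf), ?_⟩
    simp [hw]

lemma exists_walk_sub (hn : 3 ≤ n) (x : Fin n → Bool) (a : ZMod n) (t : ℕ) :
    ∃ w : (CCC n).Walk (x, a) (x, a - (t : ZMod n)), w.length = t := by
  induction t with
  | zero =>
    exact ⟨(SimpleGraph.Walk.nil).copy rfl (by simp), by simp⟩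
  | succ t ih =>
    obtain ⟨w, hw⟩ := ih
    refine ⟨(w.concat (adj_cycle' hn x _)).copy rfl (by push_cast; ring_nf), ?_⟩
    simp [hw]

lemma reach_shift (hn : 3 ≤ n) (x : Fin n → Bool) (a b : ZMod n) :
    (CCC n).Reachable (x, a) (x, b) := by
  haveI : NeZero n := ⟨by omega⟩
  obtain ⟨w, -⟩ := exists_walk_add hn x a (b - a).val
  have h : a + (((b - a).val : ℕ) : ZMod n) = b := by
    rw [ZMod.natCast_val, ZMod.cast_id]; ring
  exact ⟨w.copy rfl (by rw [h])⟩

lemma dist_same_fst (hn : 3 ≤ n) (x : Fin n → Bool) (a b : ZMod n) :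
    (CCC n).dist (x, a) (x, b) = d0 n (b - a) := by
  haveI : NeZero n := ⟨by omega⟩
  apply le_antisymm
  · by_cases hab : b = a
    · subst hab; simp [d0, sub_self]
    · have h1 : (CCC n).dist (x, a) (x, b) ≤ (b - a).val := by
        obtain ⟨w, hw⟩ := exists_walk_add hn x a (b - a).val
        have h : a + (((b - a).val : ℕ) : ZMod n) = b := by
          rw [ZMod.natCast_val, ZMod.cast_id]; ring
        calc (CCC n).dist (x, a) (x, b) ≤ (w.copy rfl (by rw [h])).length :=
              SimpleGraph.dist_le _
          _ = (b - a).val := by simpa using hw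
      have h2 : (CCC n).dist (x, a) (x, b) ≤ n - (b - a).val := by
        obtain ⟨w, hw⟩ := exists_walk_sub hn x a (a - b).val
        have h : a - (((a - b).val : ℕ) : ZMod n) = b := by
          rw [ZMod.natCast_val, ZMod.cast_id]; ring
        have hv : (a - b).val = n - (b - a).val := by
          have e : a - b = -(b - a) := by ring
          have hba : b - a ≠ 0 := sub_ne_zero.2 hab
          rw [e, ZMod.neg_val, if_neg hba]
        calc (CCC n).dist (x, a) (x, b) ≤ (w.copy rfl (by rw [h])).length :=
              SimpleGraph.dist_le _
          _ = n - (b - a).val := by simpa [hv] using hw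
      exact le_min h1 h2
  · obtain ⟨w, hw⟩ := (reach_shift hn x a b).exists_walk_length_eq_dist
    have := d0_le_walk_length (n := n) w
    simpa [hw] using this

lemma cast_fin_inj (hn : 3 ≤ n) (i j : Fin n)
    (h : ((i : ℕ) : ZMod n) = ((j : ℕ) : ZMod n)) : i = j := by
  haveI : NeZero n := ⟨by omega⟩
  have := congrArg ZMod.val h
  rw [ZMod.val_cast_of_lt i.isLt, ZMod.val_cast_of_lt j.isLt] at this
  exact Fin.ext this

lemma adj_flip (hn : 3 ≤ n) (y : Fin n → Bool) (i : Fin n) (b : Bool) (hb : y i ≠ b) :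
    (CCC n).Adj (y, ((i : ℕ) : ZMod n)) (Function.update y i b, ((i : ℕ) : ZMod n)) := by
  rw [CCC, SimpleGraph.fromRel_adj]
  constructor
  · intro h
    apply hb
    have := congrArg (fun p => p.1 i) h
    simpa [Function.update_self] using this
  · refine Or.inl (Or.inr ⟨rfl, fun j => ?_⟩)
    dsimp only
    by_cases hj : j = i
    · subst hj
      simp [Function.update_self, hb]
    · rw [Function.update_of_ne hj]
      exact iff_of_false (by simp) (fun hc => hj (cast_fin_inj hn _ _ hc))

lemma reach_all (hn : 3 ≤ n) (x : Fin n → Bool) (k : ZMod n) (y : Fin n → Bool) (j : ZMod n) :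
    (CCC n).Reachable (y, j) (x, k) := by
  classical
  suffices H : ∀ N (y : Fin n → Bool) (j : ZMod n),
      (Finset.univ.filter fun i => y i ≠ x i).card ≤ N → (CCC n).Reachable (y, j) (x, k) from
    H _ y j le_rfl
  intro N
  induction N with
  | zero =>
    intro y j hcard
    have hyx : y = x := by
      funext i
      by_contra hi
      have : i ∈ Finset.univ.filter fun i => y i ≠ x i := by simp [hi]
      have := Finset.card_pos.2 ⟨i, this⟩
      omega
    subst hyx
    exact reach_shift hn y j k
  | succ N ih =>
    intro y j hcard
    by_cases hyx : y = x
    · subst hyx; exact reach_shift hn y j k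
    · have : ∃ i, y i ≠ x i := by
        by_contra hc
        push_neg at hc
        exact hyx (funext hc)
      obtain ⟨i, hi⟩ := this
      set y' := Function.update y i (x i) with hy'
      have hmem : i ∈ Finset.univ.filter fun i => y i ≠ x i := by simp [hi]
      have hsub : (Finset.univ.filter fun i' => y' i' ≠ x i') ⊆
          (Finset.univ.filter fun i' => y i' ≠ x i').erase i := by
        intro j' hj'
        simp only [Finset.mem_filter, Finset.mem_univ, true_and] at hj'
        have hji : j' ≠ i := by
          intro h; apply hj'; rw [h, hy', Function.update_self]
        rw [Finset.mem_erase]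
        refine ⟨hji, ?_⟩
        simp only [Finset.mem_filter, Finset.mem_univ, true_and]
        rwa [hy', Function.update_of_ne hji] at hj'
      have hcard' : (Finset.univ.filter fun i' => y' i' ≠ x i').card ≤ N := by
        have h1 := Finset.card_le_card hsub
        have h2 : ((Finset.univ.filter fun i' => y i' ≠ x i').erase i).card =
            (Finset.univ.filter fun i' => y i' ≠ x i').card - 1 :=
          Finset.card_erase_of_mem hmem
        have h3 := Finset.card_pos.2 ⟨i, hmem⟩
        omega
      exact (reach_shift hn y j _).trans
        ((adj_flip hn y i (x i) hi).reachable.trans (ih y' _ hcard'))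

end CCCaux2

namespace Par
open CCCaux CCCaux2

variable {n : ℕ}

noncomputable def par (h2 : 2 ∣ n) (z : (Fin n → Bool) × ZMod n) : ZMod 2 :=
  (∑ i : Fin n, if z.1 i then 1 else 0) + ZMod.castHom h2 (ZMod 2) z.2

lemma par_rel (hn : 3 ≤ n) (h2 : 2 ∣ n) (p q : (Fin n → Bool) × ZMod n)
    (h : (p.1 = q.1 ∧ (q.2 = p.2 + 1 ∨ q.2 = p.2 - 1)) ∨
      (p.2 = q.2 ∧ ∀ i : Fin n, (p.1 i ≠ q.1 i ↔ ((i : ℕ) : ZMod n) = p.2))) :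
    par h2 q = par h2 p + 1 := by
  haveI : NeZero n := ⟨by omega⟩
  rcases h with ⟨h1, h2'⟩ | ⟨h1, h2'⟩
  · unfold par
    rw [h1]
    have key : ∀ a b : ZMod 2, a + (b - 1) = a + b + 1 := by decide
    rcases h2' with h | h <;> rw [h]
    · rw [map_add, map_one]; ring
    · rw [map_sub, map_one]; exact key _ _
  · -- cube edge
    unfold par
    rw [← h1]
    set i0 : Fin n := ⟨p.2.val, p.2.val_lt⟩ with hi0
    have hcast : ((i0 : ℕ) : ZMod n) = p.2 := by
      rw [hi0]; simp [ZMod.natCast_val, ZMod.cast_id]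
    have hflip : p.1 i0 ≠ q.1 i0 := (h2' i0).2 hcast
    have hsame : ∀ j : Fin n, j ≠ i0 → p.1 j = q.1 j := by
      intro j hj
      by_contra hc
      have := (h2' j).1 hc
      exact hj (cast_fin_inj hn j i0 (by rw [hcast]; exact this))
    have hq := (Finset.add_sum_erase Finset.univ
      (fun i => if q.1 i then (1 : ZMod 2) else 0) (Finset.mem_univ i0)).symm
    have hp := (Finset.add_sum_erase Finset.univ
      (fun i => if p.1 i then (1 : ZMod 2) else 0) (Finset.mem_univ i0)).symm
    rw [hq, hp]
    have hs : ∑ i ∈ Finset.univ.erase i0, (if q.1 i then (1 : ZMod 2) else 0) =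
        ∑ i ∈ Finset.univ.erase i0, (if p.1 i then (1 : ZMod 2) else 0) := by
      refine Finset.sum_congr rfl fun j hj => ?_
      rw [hsame j (Finset.mem_erase.1 hj).1]
    rw [hs]
    have : (if q.1 i0 then (1 : ZMod 2) else 0) = (if p.1 i0 then (1 : ZMod 2) else 0) + 1 := by
      cases hb : p.1 i0 <;> cases hb' : q.1 i0
      · exact absurd (by rw [hb, hb']) hflip
      · decide
      · decide
      · exact absurd (by rw [hb, hb']) hflip
    rw [this]
    ring

lemma par_adj (hn : 3 ≤ n) (h2 : 2 ∣ n) {p q : (Fin n → Bool) × ZMod n}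
    (h : (CCC n).Adj p q) : par h2 q = par h2 p + 1 := by
  rw [CCC, SimpleGraph.fromRel_adj] at h
  rcases h.2 with h' | h'
  · exact par_rel hn h2 p q h'
  · have := par_rel hn h2 q p h'
    have h11 : (1 : ZMod 2) + 1 = 0 := by decide
    rw [this, add_assoc, h11, add_zero]

lemma par_walk (hn : 3 ≤ n) (h2 : 2 ∣ n) {p q : (Fin n → Bool) × ZMod n}
    (w : (CCC n).Walk p q) : par h2 q = par h2 p + (w.length : ZMod 2) := by
  induction w with
  | nil => simp
  | @cons a b c hadj w ih =>
    rw [SimpleGraph.Walk.length_cons]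
    rw [ih, par_adj hn h2 hadj]
    push_cast
    ring

end Par


/-- for a cycle edge uv of CCC_n, the set of vertices equidistant from u and v is empty iff n is even. -/
theorem CCC_cycle_edge_equidistant_iff (n : ℕ) (hn : 3 ≤ n)
    (x : Fin n → Bool) (k m : ZMod n) (hm : m = k + 1 ∨ m = k - 1) :
    ({z : (Fin n → Bool) × ZMod n |
        (CCC n).dist z (x, k) = (CCC n).dist z (x, m)} = ∅) ↔ Even n := by
  haveI : NeZero n := ⟨by omega⟩
  constructor
  · intro he
    by_contra hodd
    rw [Nat.not_even_iff_odd] at hodd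
    obtain ⟨s, hs⟩ := hodd
    have hs1 : 1 ≤ s := by omega
    set T : ZMod n := ((s + 1 : ℕ) : ZMod n) with hT
    have hTval : T.val = s + 1 := ZMod.val_cast_of_lt (by omega)
    have hT1 : (T - 1).val = s := by
      have e : T - 1 = ((s : ℕ) : ZMod n) := by rw [hT]; push_cast; ring
      rw [e, ZMod.val_cast_of_lt (by omega)]
    have hd0T : CCCaux.d0 n T = s := by unfold CCCaux.d0; rw [hTval]; omega
    have hd0nT : CCCaux.d0 n (-T) = s := by rw [CCCaux.d0_neg, hd0T]
    have hd0T1 : CCCaux.d0 n (T - 1) = s := by unfold CCCaux.d0; rw [hT1]; omega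
    have hd01T : CCCaux.d0 n (1 - T) = s := by
      have e : (1 : ZMod n) - T = -(T - 1) := by ring
      rw [e, CCCaux.d0_neg, hd0T1]
    rcases hm with hm | hm
    · have hz : ((x, k + T) : (Fin n → Bool) × ZMod n) ∈ {z : (Fin n → Bool) × ZMod n |
          (CCC n).dist z (x, k) = (CCC n).dist z (x, m)} := by
        simp only [Set.mem_setOf_eq]
        rw [CCCaux2.dist_same_fst hn x (k + T) k, CCCaux2.dist_same_fst hn x (k + T) m, hm]
        have e1 : k - (k + T) = -T := by ring
        have e2 : k + 1 - (k + T) = 1 - T := by ring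
        rw [e1, e2, hd0nT, hd01T]
      rw [he] at hz
      exact hz
    · have hz : ((x, k - T) : (Fin n → Bool) × ZMod n) ∈ {z : (Fin n → Bool) × ZMod n |
          (CCC n).dist z (x, k) = (CCC n).dist z (x, m)} := by
        simp only [Set.mem_setOf_eq]
        rw [CCCaux2.dist_same_fst hn x (k - T) k, CCCaux2.dist_same_fst hn x (k - T) m, hm]
        have e1 : k - (k - T) = T := by ring
        have e2 : k - 1 - (k - T) = T - 1 := by ring
        rw [e1, e2, hd0T, hd0T1]
      rw [he] at hz
      exact hz
  · intro heven
    rw [Set.eq_empty_iff_forall_notMem]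
    intro z hz
    simp only [Set.mem_setOf_eq] at hz
    have h2 : 2 ∣ n := heven.two_dvd
    have hadj : (CCC n).Adj (x, k) (x, m) := by
      rcases hm with hm | hm
      · rw [hm]; exact CCCaux.adj_cycle hn x k
      · rw [hm]; exact CCCaux2.adj_cycle' hn x k
    obtain ⟨w1, hw1⟩ := (CCCaux2.reach_all hn x k z.1 z.2).exists_walk_length_eq_dist
    obtain ⟨w2, hw2⟩ := (CCCaux2.reach_all hn x m z.1 z.2).exists_walk_length_eq_dist
    have e1 := Par.par_walk hn h2 w1
    have e2 := Par.par_walk hn h2 w2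
    rw [hw1] at e1
    rw [hw2] at e2
    have hzz : (CCC n).dist (z.1, z.2) (x, k) = (CCC n).dist (z.1, z.2) (x, m) := hz
    have hpq : Par.par h2 (x, m) = Par.par h2 (x, k) + 1 := Par.par_adj hn h2 hadj
    rw [hpq] at e2
    rw [hzz] at e1
    exact one_ne_zero (left_eq_add.mp (e1.trans e2.symm))
end

section
/- The cube-connected cycles graph CCC_n is nicely distance-balanced if and only if n is even; when n is even, the common value is k = n * 2^{n-1}. -/
set_option linter.unusedSectionVars false
namespace CCCNDB

abbrev V (n : ℕ) := (Fin n → Bool) × ZMod n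

variable {n : ℕ} [NeZero n]

def idx (a : ZMod n) : Fin n := ⟨a.val, ZMod.val_lt a⟩

lemma cast_idx (a : ZMod n) : (((idx a : Fin n) : ℕ) : ZMod n) = a :=
  ZMod.natCast_rightInverse a

lemma idx_cast (i : Fin n) : idx (((i : ℕ) : ZMod n)) = i := by
  ext
  simp [idx, ZMod.val_cast_of_lt i.isLt]

lemma cast_inj {i j : Fin n} (h : ((i:ℕ):ZMod n) = ((j:ℕ):ZMod n)) : i = j := by
  have := congrArg idx h
  rwa [idx_cast, idx_cast] at this

def flip (j : Fin n) (y : Fin n → Bool) : Fin n → Bool := Function.update y j (!(y j))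

@[simp] lemma flip_apply_self (j : Fin n) (y : Fin n → Bool) : flip j y j = !(y j) := by
  simp [flip]

@[simp] lemma flip_apply_ne (j i : Fin n) (y : Fin n → Bool) (h : i ≠ j) : flip j y i = y i := by
  simp [flip, Function.update_of_ne h]

lemma flip_flip (j : Fin n) (y : Fin n → Bool) : flip j (flip j y) = y := by
  funext i
  by_cases h : i = j
  · subst h; simp
  · simp [h]

lemma flip_ne (j : Fin n) (y : Fin n → Bool) : flip j y ≠ y := by
  intro h
  have := congrFun h j
  simp at this

/-- normalized elimination of adjacency -/
lemma adj_elim {p q : V n} (h : (CCC n).Adj p q) :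
    p ≠ q ∧ ((p.1 = q.1 ∧ (q.2 = p.2 + 1 ∨ q.2 = p.2 - 1)) ∨
      (p.2 = q.2 ∧ ∀ i : Fin n, (p.1 i ≠ q.1 i ↔ ((i : ℕ) : ZMod n) = p.2))) := by
  rw [CCC, SimpleGraph.fromRel_adj] at h
  obtain ⟨hne, h | h⟩ := h
  · exact ⟨hne, h⟩
  · refine ⟨hne, ?_⟩
    rcases h with ⟨h1, h2⟩ | ⟨h1, h2⟩
    · refine Or.inl ⟨h1.symm, ?_⟩
      rcases h2 with h2 | h2
      · exact Or.inr (by rw [h2]; ring)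
      · exact Or.inl (by rw [h2]; ring)
    · refine Or.inr ⟨h1.symm, fun i => ?_⟩
      rw [← h1]
      exact (ne_comm.symm.trans (h2 i))

lemma adj_cycle (y : Fin n → Bool) (a : ZMod n) (h1 : (1 : ZMod n) ≠ 0) :
    (CCC n).Adj (y, a) (y, a + 1) := by
  rw [CCC, SimpleGraph.fromRel_adj]
  refine ⟨?_, Or.inl (Or.inl ⟨rfl, Or.inl rfl⟩)⟩
  intro h
  have := congrArg Prod.snd h
  simp only at this
  exact h1 (by linear_combination -this)

lemma adj_cube (y : Fin n → Bool) (j : Fin n) :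
    (CCC n).Adj (y, ((j:ℕ) : ZMod n)) (flip j y, ((j:ℕ) : ZMod n)) := by
  rw [CCC, SimpleGraph.fromRel_adj]
  constructor
  · intro h
    exact flip_ne j y (congrArg Prod.fst h).symm
  · refine Or.inl (Or.inr ⟨rfl, fun i => ?_⟩)
    by_cases h : i = j
    · subst h; simp
    · simp only [flip_apply_ne j i y h]
      constructor
      · intro hh; exact absurd rfl hh
      · intro hh; exact absurd (cast_inj hh) h


lemma adj_iff {p q : V n} : (CCC n).Adj p q ↔ (p ≠ q ∧
    ((p.1 = q.1 ∧ (q.2 = p.2 + 1 ∨ q.2 = p.2 - 1)) ∨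
      (p.2 = q.2 ∧ ∀ i : Fin n, (p.1 i ≠ q.1 i ↔ ((i : ℕ) : ZMod n) = p.2)))) :=
  ⟨adj_elim, fun ⟨h1, h2⟩ => by rw [CCC, SimpleGraph.fromRel_adj]; exact ⟨h1, Or.inl h2⟩⟩

/-! ### the coordinate-flip automorphism -/

def tauFun (j : Fin n) : V n → V n := fun p => (flip j p.1, p.2)

lemma tau_invol (j : Fin n) : Function.Involutive (tauFun j) := fun p => by
  simp [tauFun, flip_flip]

lemma tau_adj (j : Fin n) {p q : V n} (h : (CCC n).Adj p q) :
    (CCC n).Adj (tauFun j p) (tauFun j q) := by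
  rw [adj_iff] at h ⊢
  obtain ⟨hne, h⟩ := h
  refine ⟨fun hc => hne ((tau_invol j).injective hc), ?_⟩
  rcases h with ⟨h1, h2⟩ | ⟨h1, h2⟩
  · exact Or.inl ⟨congrArg (flip j) h1, h2⟩
  · refine Or.inr ⟨h1, fun i => ?_⟩
    simp only [tauFun]
    by_cases hij : i = j
    · subst hij
      simpa using h2 i
    · rw [flip_apply_ne j i _ hij, flip_apply_ne j i _ hij]
      exact h2 i

def tauIso (j : Fin n) : CCC n ≃g CCC n where
  toEquiv := (tau_invol j).toPerm
  map_rel_iff' := by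
    intro p q
    simp only [Function.Involutive.coe_toPerm]
    constructor
    · intro h
      have h2 := tau_adj j h
      rwa [tau_invol j p, tau_invol j q] at h2
    · exact tau_adj j

/-! ### the reflection automorphism -/

def rhoFun (c : ZMod n) (s : Fin n → Bool) : V n → V n :=
  fun p => (fun i => xor (s i) (p.1 (idx (c - ((i:ℕ) : ZMod n)))), c - p.2)

lemma rho_invol (c : ZMod n) (s : Fin n → Bool)
    (hs : ∀ i : Fin n, s (idx (c - ((i:ℕ) : ZMod n))) = s i) :
    Function.Involutive (rhoFun c s) := by
  intro p
  have hcc : ∀ i : Fin n, idx (c - (((idx (c - ((i:ℕ):ZMod n)) : Fin n) : ℕ) : ZMod n)) = i :=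
    fun i => by rw [cast_idx, sub_sub_cancel, idx_cast]
  refine Prod.ext ?_ (by simp [rhoFun, sub_sub_cancel])
  funext i
  simp only [rhoFun, hcc, hs]
  cases s i <;> simp

lemma rho_adj (c : ZMod n) (s : Fin n → Bool)
    (hs : ∀ i : Fin n, s (idx (c - ((i:ℕ) : ZMod n))) = s i)
    {p q : V n} (h : (CCC n).Adj p q) :
    (CCC n).Adj (rhoFun c s p) (rhoFun c s q) := by
  rw [adj_iff] at h ⊢
  obtain ⟨hne, h⟩ := h
  refine ⟨fun hc => hne ((rho_invol c s hs).injective hc), ?_⟩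
  rcases h with ⟨h1, h2⟩ | ⟨h1, h2⟩
  · refine Or.inl ⟨by simp [rhoFun, h1], ?_⟩
    rcases h2 with h2 | h2
    · exact Or.inr (by simp only [rhoFun, h2]; ring)
    · exact Or.inl (by simp only [rhoFun, h2]; ring)
  · refine Or.inr ⟨by simp [rhoFun, h1], fun i => ?_⟩
    simp only [rhoFun]
    have : (xor (s i) (p.1 (idx (c - ((i:ℕ):ZMod n)))) ≠ xor (s i) (q.1 (idx (c - ((i:ℕ):ZMod n)))))
        ↔ (p.1 (idx (c - ((i:ℕ):ZMod n))) ≠ q.1 (idx (c - ((i:ℕ):ZMod n)))) := by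
      cases s i <;> simp
    rw [this, h2 (idx (c - ((i:ℕ):ZMod n))), cast_idx]
    constructor
    · intro hh; rw [← hh]; ring
    · intro hh; rw [hh]; ring

def rhoIso (c : ZMod n) (s : Fin n → Bool)
    (hs : ∀ i : Fin n, s (idx (c - ((i:ℕ) : ZMod n))) = s i) : CCC n ≃g CCC n where
  toEquiv := (rho_invol c s hs).toPerm
  map_rel_iff' := by
    intro p q
    simp only [Function.Involutive.coe_toPerm]
    constructor
    · intro h
      have h2 := rho_adj c s hs h
      rwa [rho_invol c s hs p, rho_invol c s hs q] at h2
    · exact rho_adj c s hs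

/-! ### distance is preserved by isomorphisms -/

lemma iso_dist {W : Type*} {G : SimpleGraph W} (hc : G.Connected) (φ : G ≃g G) (a b : W) :
    G.dist (φ a) (φ b) = G.dist a b := by
  have key : ∀ (ψ : G ≃g G) (a b : W), G.dist (ψ a) (ψ b) ≤ G.dist a b := by
    intro ψ a b
    obtain ⟨w, hw⟩ := (hc a b).exists_walk_length_eq_dist
    calc G.dist (ψ a) (ψ b) ≤ (w.map ψ.toHom).length := SimpleGraph.dist_le _
      _ = w.length := SimpleGraph.Walk.length_map _ _
      _ = G.dist a b := hw
  refine le_antisymm (key φ a b) ?_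
  have := key φ.symm (φ a) (φ b)
  simpa using this

/-! ### connectivity -/

lemma reach_up (h1 : (1 : ZMod n) ≠ 0) (y : Fin n → Bool) (a : ZMod n) (t : ℕ) :
    (CCC n).Reachable (y, a) (y, a + (t : ℕ)) := by
  induction t with
  | zero =>
      have : a + ((0:ℕ):ZMod n) = a := by push_cast; ring
      rw [this]
  | succ t ih =>
      refine ih.trans ?_
      have h := adj_cycle y (a + (t:ℕ)) h1
      have : a + ((t+1 : ℕ) : ZMod n) = a + (t:ℕ) + 1 := by push_cast; ring
      rw [this]
      exact h.reachable

lemma reach_level (h1 : (1 : ZMod n) ≠ 0) (y : Fin n → Bool) (a b : ZMod n) :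
    (CCC n).Reachable (y, a) (y, b) := by
  have : b = a + (((b - a).val : ℕ) : ZMod n) := by
    rw [ZMod.natCast_rightInverse (b - a)]; ring
  rw [this]
  exact reach_up h1 y a _

lemma reach_flip (h1 : (1 : ZMod n) ≠ 0) (y : Fin n → Bool) (j : Fin n) (m : ZMod n) :
    (CCC n).Reachable (y, m) (flip j y, m) := by
  refine (reach_level h1 y m ((j:ℕ):ZMod n)).trans ?_
  exact (adj_cube y j).reachable.trans (reach_level h1 (flip j y) _ m)

lemma ccc_conn (h1 : (1 : ZMod n) ≠ 0) : (CCC n).Connected := by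
  rw [SimpleGraph.connected_iff]
  refine ⟨?_, ⟨((fun _ => false), 0)⟩⟩
  have aux : ∀ (d : ℕ) (y x : Fin n → Bool) (m k : ZMod n),
      (Finset.univ.filter fun i => y i ≠ x i).card ≤ d → (CCC n).Reachable (y, m) (x, k) := by
    intro d
    induction d with
    | zero =>
        intro y x m k h
        have : y = x := by
          funext i
          by_contra hi
          have : i ∈ Finset.univ.filter fun i => y i ≠ x i := by simp [hi]
          have := Finset.card_pos.mpr ⟨i, this⟩
          omega
        subst this
        exact reach_level h1 y m k
    | succ d ih =>
        intro y x m k h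
        by_cases hemp : (Finset.univ.filter fun i => y i ≠ x i) = ∅
        · have : y = x := by
            funext i
            by_contra hi
            have : i ∈ Finset.univ.filter fun i => y i ≠ x i := by simp [hi]
            rw [hemp] at this
            simp at this
          subst this
          exact reach_level h1 y m k
        · obtain ⟨j, hj⟩ := Finset.nonempty_iff_ne_empty.mpr hemp
          simp only [Finset.mem_filter, Finset.mem_univ, true_and] at hj
          refine (reach_flip h1 y j m).trans (ih (flip j y) x m k ?_)
          have hset : (Finset.univ.filter fun i => flip j y i ≠ x i) =
              (Finset.univ.filter fun i => y i ≠ x i).erase j := by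
            ext i
            simp only [Finset.mem_filter, Finset.mem_univ, true_and, Finset.mem_erase]
            by_cases hij : i = j
            · subst hij
              have hx : (!(y i)) = x i := by revert hj; cases y i <;> cases x i <;> simp
              simp [hx]
            · rw [flip_apply_ne j i y hij]
              tauto
          rw [hset]
          have hcard : (Finset.univ.filter fun i => y i ≠ x i).card ≤ d + 1 := h
          have hjmem : j ∈ Finset.univ.filter fun i => y i ≠ x i := by simp [hj]
          have := Finset.card_erase_of_mem hjmem
          omega
  intro p q
  exact aux (Finset.univ.filter fun i => p.1 i ≠ q.1 i).card p.1 q.1 p.2 q.2 le_rfl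


lemma one_ne (hn3 : 3 ≤ n) : (1 : ZMod n) ≠ 0 := by
  haveI : Fact (1 < n) := ⟨by omega⟩
  exact one_ne_zero

/-! ### structure of cube edges -/

lemma adj_strings_ne {p q : V n} (h : (CCC n).Adj p q) (hs : p.1 ≠ q.1) :
    p.2 = q.2 ∧ ∀ i : Fin n, (p.1 i ≠ q.1 i ↔ ((i : ℕ) : ZMod n) = p.2) := by
  rcases (adj_elim h).2 with ⟨h1, _⟩ | hc
  · exact absurd h1 hs
  · exact hc

lemma cube_struct {p q : V n} (h2 : ∀ i : Fin n, (p.1 i ≠ q.1 i ↔ ((i : ℕ) : ZMod n) = p.2)) :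
    q.1 = flip (idx p.2) p.1 := by
  funext i
  by_cases hij : i = idx p.2
  · have hne : p.1 i ≠ q.1 i := (h2 i).mpr (by rw [hij]; exact cast_idx p.2)
    rw [hij, flip_apply_self]
    rw [hij] at hne
    revert hne
    cases p.1 (idx p.2) <;> cases q.1 (idx p.2) <;> simp
  · have heq : p.1 i = q.1 i := by
      by_contra hne
      exact hij (by rw [← idx_cast i, (h2 i).mp hne])
    rw [flip_apply_ne _ _ _ hij, heq]

/-! ### walk surgery: cube edges have no equidistant vertices -/

lemma cube_shortcut (j : Fin n) {z a : V n} (w : (CCC n).Walk z a)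
    (ha : a.2 = ((j:ℕ) : ZMod n)) (hz : z.1 j ≠ a.1 j) :
    ∃ w' : (CCC n).Walk z (flip j a.1, a.2), w'.length + 1 ≤ w.length := by
  induction w with
  | nil => exact absurd rfl hz
  | @cons z b a h w' ih =>
      by_cases hb : z.1 j = b.1 j
      · obtain ⟨w'', hw⟩ := ih ha (hb ▸ hz)
        exact ⟨SimpleGraph.Walk.cons h w'', by
          simp only [SimpleGraph.Walk.length_cons]; omega⟩
      · have hsne : z.1 ≠ b.1 := fun hh => hb (congrFun hh j)
        obtain ⟨hlev, hpat⟩ := adj_strings_ne h hsne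
        have hz2 : ((j:ℕ) : ZMod n) = z.2 := (hpat j).mp hb
        have hb1 : b.1 = flip j z.1 := by
          have := cube_struct hpat
          rwa [← hz2, idx_cast] at this
        have htb : (tauIso j).toHom b = z := by
          show tauFun j b = z
          rw [show b = (b.1, b.2) from rfl, show z = (z.1, z.2) from rfl]
          simp only [tauFun, hb1, flip_flip]
          exact Prod.ext rfl (hz2 ▸ hlev.symm)
        have hta : (tauIso j).toHom a = (flip j a.1, a.2) := rfl
        refine ⟨((w'.map (tauIso j).toHom).copy htb hta), ?_⟩
        simp only [SimpleGraph.Walk.length_copy, SimpleGraph.Walk.length_map,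
          SimpleGraph.Walk.length_cons]
        omega

lemma cube_not_equidistant (hn3 : 3 ≤ n) (u : V n) (j : Fin n)
    (hu2 : u.2 = ((j:ℕ) : ZMod n)) (z : V n) :
    (CCC n).dist z u ≠ (CCC n).dist z (flip j u.1, u.2) := by
  have hc := ccc_conn (n := n) (one_ne hn3)
  by_cases hz : z.1 j = u.1 j
  · obtain ⟨w, hw⟩ := (hc z (flip j u.1, u.2)).exists_walk_length_eq_dist
    have hzv : z.1 j ≠ (flip j u.1 : Fin n → Bool) j := by
      simp only [flip_apply_self]
      rw [hz]
      cases u.1 j <;> simp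
    obtain ⟨w', hw'⟩ := cube_shortcut j w hu2 hzv
    have hteq : ((flip j (flip j u.1) : Fin n → Bool), (u.2 : ZMod n)) = u :=
      Prod.ext (flip_flip j u.1) rfl
    have hle : (CCC n).dist z u ≤ w'.length := by
      have := SimpleGraph.dist_le (w'.copy rfl hteq)
      rwa [SimpleGraph.Walk.length_copy] at this
    omega
  · obtain ⟨w, hw⟩ := (hc z u).exists_walk_length_eq_dist
    obtain ⟨w', hw'⟩ := cube_shortcut j w hu2 hz
    have hle := SimpleGraph.dist_le w'
    omega

/-! ### parity: even n means bipartite, no equidistant vertices at all -/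

def chi (hd : 2 ∣ n) (p : V n) : ZMod 2 :=
  (∑ i : Fin n, (cond (p.1 i) 1 0 : ZMod 2)) + ZMod.castHom hd (ZMod 2) p.2

lemma chi_adj (hd : 2 ∣ n) {p q : V n} (h : (CCC n).Adj p q) : chi hd q = chi hd p + 1 := by
  rcases (adj_elim h).2 with ⟨h1, h2⟩ | ⟨h1, h2⟩
  · unfold chi
    rw [← h1]
    rcases h2 with h2 | h2
    · rw [h2, map_add, map_one]
      ring
    · rw [h2, map_sub, map_one]
      have h20 : (2 : ZMod 2) = 0 := by decide
      linear_combination -h20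
  · unfold chi
    rw [← h1]
    have hq1 : q.1 = flip (idx p.2) p.1 := cube_struct h2
    rw [hq1]
    have hsum : ∑ i : Fin n, (cond ((flip (idx p.2) p.1) i) 1 0 : ZMod 2)
        = (∑ i : Fin n, (cond (p.1 i) 1 0 : ZMod 2)) + 1 := by
      have step : ∀ i : Fin n, (cond ((flip (idx p.2) p.1) i) 1 0 : ZMod 2)
          = (cond (p.1 i) 1 0 : ZMod 2) + (if i = idx p.2 then 1 else 0) := by
        intro i
        by_cases hij : i = idx p.2
        · rw [hij, flip_apply_self]
          simp only [if_pos rfl]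
          cases p.1 (idx p.2) <;> decide
        · rw [flip_apply_ne _ _ _ hij, if_neg hij]
          ring
      rw [Finset.sum_congr rfl (fun i _ => step i), Finset.sum_add_distrib,
        Finset.sum_ite_eq' Finset.univ (idx p.2) (fun _ => (1 : ZMod 2))]
      simp
    rw [hsum]
    ring

lemma walk_parity (hd : 2 ∣ n) {a b : V n} (w : (CCC n).Walk a b) :
    ((w.length : ℕ) : ZMod 2) = chi hd b - chi hd a := by
  induction w with
  | nil => simp
  | @cons a c b h w ih =>
      rw [SimpleGraph.Walk.length_cons]
      push_cast
      rw [ih, chi_adj hd h]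
      ring

lemma even_not_equidistant (hn3 : 3 ≤ n) (hd : 2 ∣ n) {u v : V n} (h : (CCC n).Adj u v)
    (z : V n) : (CCC n).dist z u ≠ (CCC n).dist z v := by
  have hc := ccc_conn (n := n) (one_ne hn3)
  intro heq
  obtain ⟨wu, hwu⟩ := (hc z u).exists_walk_length_eq_dist
  obtain ⟨wv, hwv⟩ := (hc z v).exists_walk_length_eq_dist
  have pu := walk_parity hd wu
  have pv := walk_parity hd wv
  rw [hwu] at pu
  rw [hwv] at pv
  rw [heq, pv] at pu
  rw [chi_adj hd h] at pu
  have : (1 : ZMod 2) = 0 := by linear_combination pu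
  exact one_ne_zero this

/-! ### projection to the cycle: lower bound on distance -/

def cyc (x : ZMod n) : ℕ := min x.val (-x).val

lemma cyc_neg (x : ZMod n) : cyc (-x) = cyc x := by
  simp [cyc, neg_neg, Nat.min_comm]

lemma cyc_succ_le (hn3 : 3 ≤ n) (x : ZMod n) : cyc (x + 1) ≤ cyc x + 1 := by
  haveI : Fact (1 < n) := ⟨by omega⟩
  by_cases hx0 : x = 0
  · subst hx0
    have : cyc (0 + 1 : ZMod n) ≤ (1 : ZMod n).val := by
      rw [zero_add]; exact min_le_left _ _
    rw [ZMod.val_one] at this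
    omega
  by_cases hx1 : x + 1 = 0
  · rw [hx1]
    have : cyc (0 : ZMod n) = 0 := by simp [cyc]
    omega
  · have hxm1 : x ≠ -1 := fun hh => hx1 (by rw [hh]; ring)
    have hvlt : x.val < n := ZMod.val_lt x
    have hvne : x.val ≠ n - 1 := by
      intro hh
      apply hxm1
      have : x = ((x.val : ℕ) : ZMod n) := (ZMod.natCast_rightInverse x).symm
      rw [this, hh]
      have : ((n - 1 : ℕ) : ZMod n) = (n : ZMod n) - 1 := by
        push_cast [Nat.cast_sub (by omega : 1 ≤ n)]
        ring
      rw [this, ZMod.natCast_self]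
      ring
    have e1 : (x + 1).val = x.val + 1 := by
      rw [ZMod.val_add_of_lt]
      · rw [ZMod.val_one]
      · rw [ZMod.val_one]; omega
    have hnx : (-x) ≠ 0 := fun hh => hx0 (by linear_combination -hh)
    have h1le : 1 ≤ (-x).val := by
      rcases Nat.eq_zero_or_pos (-x).val with hh | hh
      · exact absurd ((ZMod.val_eq_zero _).mp hh) hnx
      · omega
    have e2 : (-(x + 1)).val = (-x).val - 1 := by
      have hc : ((-x).val - 1 : ℕ) < n := by
        have := ZMod.val_lt (-x)
        omega
      have : -(x + 1) = (((-x).val - 1 : ℕ) : ZMod n) := by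
        rw [Nat.cast_sub h1le, ZMod.natCast_rightInverse (-x)]
        push_cast
        ring
      rw [this, ZMod.val_cast_of_lt hc]
    unfold cyc
    rw [e1, e2]
    omega

lemma cyc_pred_le (hn3 : 3 ≤ n) (x : ZMod n) : cyc (x - 1) ≤ cyc x + 1 := by
  have h1 := cyc_succ_le hn3 (-x)
  have e : -x + 1 = -(x - 1) := by ring
  rw [e, cyc_neg, cyc_neg] at h1
  exact h1

lemma level_lb (hn3 : 3 ≤ n) {z p : V n} (w : (CCC n).Walk z p) :
    cyc (p.2 - z.2) ≤ w.length := by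
  induction w with
  | nil => simp [cyc]
  | @cons z b p h w ih =>
      rw [SimpleGraph.Walk.length_cons]
      have hstep : cyc (p.2 - z.2) ≤ cyc (p.2 - b.2) + 1 := by
        rcases (adj_elim h).2 with ⟨_, h2 | h2⟩ | ⟨h1, _⟩
        · have e : p.2 - z.2 = (p.2 - b.2) + 1 := by rw [h2]; ring
          rw [e]; exact cyc_succ_le hn3 _
        · have e : p.2 - z.2 = (p.2 - b.2) - 1 := by rw [h2]; ring
          rw [e]; exact cyc_pred_le hn3 _
        · rw [h1]; omega
      omega

lemma dist_level_lb (hn3 : 3 ≤ n) (z p : V n) : cyc (p.2 - z.2) ≤ (CCC n).dist z p := by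
  obtain ⟨w, hw⟩ := (ccc_conn (n := n) (one_ne hn3) z p).exists_walk_length_eq_dist
  rw [← hw]
  exact level_lb hn3 w

lemma dist_up (hn3 : 3 ≤ n) (y : Fin n → Bool) (a : ZMod n) (t : ℕ) :
    (CCC n).dist (y, a) (y, a + (t : ℕ)) ≤ t := by
  have hc := ccc_conn (n := n) (one_ne hn3)
  induction t with
  | zero => simp
  | succ t ih =>
      have htri := hc.dist_triangle (u := ((y, a) : V n)) (v := (y, a + (t:ℕ)))
        (w := (y, a + ((t+1 : ℕ) : ZMod n)))
      have hadj : (CCC n).Adj (y, a + (t:ℕ)) (y, a + ((t+1:ℕ) : ZMod n)) := by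
        have : a + ((t+1 : ℕ) : ZMod n) = (a + (t:ℕ)) + 1 := by push_cast; ring
        rw [this]
        exact adj_cycle y _ (one_ne hn3)
      have h1 : (CCC n).dist (y, a + (t:ℕ)) (y, a + ((t+1:ℕ):ZMod n)) ≤ 1 :=
        SimpleGraph.dist_le (hadj.toWalk)
      omega

/-- for odd n, the vertex `(x, (n+1)/2)` is equidistant from `(x,0)` and `(x,1)`. -/
lemma odd_equidistant (hn3 : 3 ≤ n) (hodd : ¬ (2 ∣ n)) (x : Fin n → Bool) :
    (CCC n).dist ((x, (((n+1)/2 : ℕ) : ZMod n)) : V n) (x, 0)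
      = (CCC n).dist ((x, (((n+1)/2 : ℕ) : ZMod n)) : V n) (x, 1) := by
  set h : ℕ := (n-1)/2 with hh
  set H : ℕ := (n+1)/2 with hH
  have hsum : h + H = n := by omega
  have hlt : h < n := by omega
  have Hlt : H < n := by omega
  have hcast : ((h : ℕ) : ZMod n) + ((H : ℕ) : ZMod n) = 0 := by
    rw [← Nat.cast_add, hsum, ZMod.natCast_self]
  -- dist to (x,0) : upper bound h
  have hub0 : (CCC n).dist ((x, ((H:ℕ) : ZMod n)) : V n) (x, 0) ≤ h := by
    have := dist_up hn3 x ((H:ℕ) : ZMod n) h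
    have e : ((H:ℕ) : ZMod n) + ((h:ℕ) : ZMod n) = 0 := by rw [add_comm]; exact hcast
    rwa [e] at this
  have hlb0 : h ≤ (CCC n).dist ((x, ((H:ℕ) : ZMod n)) : V n) (x, 0) := by
    have := dist_level_lb hn3 ((x, ((H:ℕ) : ZMod n)) : V n) ((x, 0) : V n)
    have e : ((0 : ZMod n) - ((H:ℕ):ZMod n)) = ((h:ℕ) : ZMod n) := by
      linear_combination -hcast
    rw [e] at this
    have : cyc ((h:ℕ) : ZMod n) ≤ _ := this
    have hv1 : (((h:ℕ) : ZMod n)).val = h := ZMod.val_cast_of_lt hlt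
    have hv2 : ((-((h:ℕ) : ZMod n))).val = H := by
      have e2 : -((h:ℕ) : ZMod n) = ((H:ℕ) : ZMod n) := by linear_combination -hcast
      rw [e2, ZMod.val_cast_of_lt Hlt]
    unfold cyc at this
    rw [hv1, hv2] at this
    omega
  -- dist to (x,1) : upper bound h
  have hub1 : (CCC n).dist ((x, ((H:ℕ) : ZMod n)) : V n) (x, 1) ≤ h := by
    have := dist_up hn3 x (1 : ZMod n) h
    have e : (1 : ZMod n) + ((h:ℕ) : ZMod n) = ((H:ℕ) : ZMod n) := by
      have : (H : ℕ) = h + 1 := by omega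
      rw [this]
      push_cast
      ring
    rw [e] at this
    calc (CCC n).dist ((x, ((H:ℕ) : ZMod n)) : V n) (x, 1)
        = (CCC n).dist ((x, 1) : V n) (x, ((H:ℕ) : ZMod n)) := by rw [SimpleGraph.dist_comm]
      _ ≤ h := this
  have hlb1 : h ≤ (CCC n).dist ((x, ((H:ℕ) : ZMod n)) : V n) (x, 1) := by
    have := dist_level_lb hn3 ((x, ((H:ℕ) : ZMod n)) : V n) ((x, 1) : V n)
    have e : ((1 : ZMod n) - ((H:ℕ):ZMod n)) = -((h:ℕ) : ZMod n) := by
      have : (H : ℕ) = h + 1 := by omega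
      rw [this]
      push_cast
      ring
    rw [e, cyc_neg] at this
    have hv1 : (((h:ℕ) : ZMod n)).val = h := ZMod.val_cast_of_lt hlt
    have hv2 : ((-((h:ℕ) : ZMod n))).val = H := by
      have e2 : -((h:ℕ) : ZMod n) = ((H:ℕ) : ZMod n) := by linear_combination -hcast
      rw [e2, ZMod.val_cast_of_lt Hlt]
    unfold cyc at this
    rw [hv1, hv2] at this
    omega
  omega

/-! ### counting -/

lemma card_V : Nat.card (V n) = n * 2 ^ n := by
  rw [Nat.card_eq_fintype_card, Fintype.card_prod, Fintype.card_fun, Fintype.card_bool,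
    Fintype.card_fin, ZMod.card]
  ring

lemma count_eq (hn3 : 3 ≤ n) {u v : V n} (φ : CCC n ≃g CCC n) (hu : φ u = v) (hv : φ v = u)
    (hne : ∀ z : V n, (CCC n).dist z u ≠ (CCC n).dist z v) :
    Nat.card {z : V n | (CCC n).dist z u < (CCC n).dist z v} = n * 2 ^ (n - 1) ∧
    Nat.card {z : V n | (CCC n).dist z v < (CCC n).dist z u} = n * 2 ^ (n - 1) := by
  have hc := ccc_conn (n := n) (one_ne hn3)
  set W1 := {z : V n | (CCC n).dist z u < (CCC n).dist z v} with hW1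
  set W2 := {z : V n | (CCC n).dist z v < (CCC n).dist z u} with hW2
  have d1 : ∀ z : V n, (CCC n).dist (φ z) v = (CCC n).dist z u := fun z => by
    rw [← hu]; exact iso_dist hc φ z u
  have d2 : ∀ z : V n, (CCC n).dist (φ z) u = (CCC n).dist z v := fun z => by
    rw [← hv]; exact iso_dist hc φ z v
  have hiff : ∀ z : V n, z ∈ W1 ↔ (φ z) ∈ W2 := by
    intro z
    simp only [hW1, hW2, Set.mem_setOf_eq, d1, d2]
  have heq : Nat.card W1 = Nat.card W2 :=
    Nat.card_congr (Equiv.subtypeEquiv φ.toEquiv hiff)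
  have hdisj : Disjoint W1 W2 := by
    rw [Set.disjoint_left]
    intro z hz1 hz2
    simp only [hW1, hW2, Set.mem_setOf_eq] at hz1 hz2
    omega
  have hunion : W1 ∪ W2 = Set.univ := by
    ext z
    simp only [Set.mem_union, hW1, hW2, Set.mem_setOf_eq, Set.mem_univ, iff_true]
    exact (hne z).lt_or_gt
  have hsum : W1.ncard + W2.ncard = Nat.card (V n) := by
    rw [← Set.ncard_union_eq hdisj (Set.toFinite _) (Set.toFinite _), hunion, Set.ncard_univ]
  rw [Nat.card_coe_set_eq, Nat.card_coe_set_eq] at heq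
  have hpow : 2 ^ n = 2 ^ (n - 1) * 2 := by
    rw [← pow_succ, Nat.sub_add_cancel (by omega : 1 ≤ n)]
  have htot : Nat.card (V n) = 2 * (n * 2 ^ (n - 1)) := by
    rw [card_V, hpow]; ring
  rw [htot] at hsum
  constructor
  · rw [Nat.card_coe_set_eq]; omega
  · rw [Nat.card_coe_set_eq]; omega

/-! ### the two edge types -/

lemma cube_case (hn3 : 3 ≤ n) {u v : V n} (h1 : u.2 = v.2)
    (h2 : ∀ i : Fin n, (u.1 i ≠ v.1 i ↔ ((i : ℕ) : ZMod n) = u.2)) :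
    Nat.card {z : V n | (CCC n).dist z u < (CCC n).dist z v} = n * 2 ^ (n - 1) ∧
    Nat.card {z : V n | (CCC n).dist z v < (CCC n).dist z u} = n * 2 ^ (n - 1) := by
  set j := idx u.2 with hj
  have hv1 : v.1 = flip j u.1 := cube_struct h2
  have hveq : v = (flip j u.1, u.2) := Prod.ext hv1 h1.symm
  have hphiu : (tauIso j) u = v := by
    show tauFun j u = v
    rw [hveq]
    rfl
  have hphiv : (tauIso j) v = u := by
    show tauFun j v = u
    rw [hveq]
    show ((flip j (flip j u.1) : Fin n → Bool), u.2) = u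
    rw [flip_flip]
  have hne : ∀ z : V n, (CCC n).dist z u ≠ (CCC n).dist z v := by
    intro z
    have := cube_not_equidistant hn3 u j (cast_idx u.2).symm z
    rwa [← hveq] at this
  exact count_eq hn3 (tauIso j) hphiu hphiv hne

lemma cycle_swap (x : Fin n → Bool) (k : ZMod n) :
    ∃ φ : CCC n ≃g CCC n, φ (x, k) = (x, k + 1) ∧ φ (x, k + 1) = (x, k) := by
  set c : ZMod n := 2 * k + 1 with hc
  set s : Fin n → Bool := fun i => xor (x (idx (c - ((i:ℕ) : ZMod n)))) (x i) with hs'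
  have hs : ∀ i : Fin n, s (idx (c - ((i:ℕ) : ZMod n))) = s i := by
    intro i
    simp only [hs']
    rw [cast_idx, sub_sub_cancel, idx_cast]
    exact Bool.xor_comm _ _
  refine ⟨rhoIso c s hs, ?_, ?_⟩
  · show rhoFun c s (x, k) = (x, k + 1)
    refine Prod.ext ?_ (by show c - k = k + 1; rw [hc]; ring)
    funext i
    show xor (s i) (x (idx (c - ((i:ℕ) : ZMod n)))) = x i
    simp only [hs']
    generalize x (idx (c - ((i:ℕ) : ZMod n))) = a
    cases a <;> cases x i <;> rfl
  · show rhoFun c s (x, k + 1) = (x, k)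
    refine Prod.ext ?_ (by show c - (k + 1) = k; rw [hc]; ring)
    funext i
    show xor (s i) (x (idx (c - ((i:ℕ) : ZMod n)))) = x i
    simp only [hs']
    generalize x (idx (c - ((i:ℕ) : ZMod n))) = a
    cases a <;> cases x i <;> rfl

/-! ### main lemmas -/

lemma main_even (hn3 : 3 ≤ n) (hd : 2 ∣ n) :
    ∀ u v : V n, (CCC n).Adj u v →
      Nat.card {z : V n | (CCC n).dist z u < (CCC n).dist z v} = n * 2 ^ (n - 1) ∧
      Nat.card {z : V n | (CCC n).dist z v < (CCC n).dist z u} = n * 2 ^ (n - 1) := by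
  intro u v h
  rcases (adj_elim h).2 with ⟨h1, h2⟩ | ⟨h1, h2⟩
  · -- cycle edge
    have hne : ∀ z : V n, (CCC n).dist z u ≠ (CCC n).dist z v :=
      fun z => even_not_equidistant hn3 hd h z
    rcases h2 with h2 | h2
    · obtain ⟨φ, hp1, hp2⟩ := cycle_swap u.1 u.2
      have hueq : ((u.1, u.2) : V n) = u := rfl
      have hveq : ((u.1, u.2 + 1) : V n) = v := Prod.ext h1 h2.symm
      rw [hueq, hveq] at hp1 hp2
      exact count_eq hn3 φ hp1 hp2 hne
    · obtain ⟨φ, hp1, hp2⟩ := cycle_swap v.1 v.2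
      have hveq : ((v.1, v.2) : V n) = v := rfl
      have hueq : ((v.1, v.2 + 1) : V n) = u := by
        refine Prod.ext h1.symm ?_
        show v.2 + 1 = u.2
        rw [h2]; ring
      rw [hveq, hueq] at hp1 hp2
      exact count_eq hn3 φ hp2 hp1 hne
  · exact cube_case hn3 h1 h2

lemma main_odd (hn3 : 3 ≤ n) (hodd : ¬ (2 ∣ n)) :
    ¬ ∃ c : ℕ, ∀ u v : V n, (CCC n).Adj u v →
        Nat.card {z : V n | (CCC n).dist z u < (CCC n).dist z v} = c ∧
        Nat.card {z : V n | (CCC n).dist z v < (CCC n).dist z u} = c := by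
  rintro ⟨c, hcc⟩
  -- a cube edge pins down c
  set x0 : Fin n → Bool := fun _ => false with hx0
  set j0 : Fin n := ⟨0, by omega⟩ with hj0
  have hadj0 := adj_cube x0 j0
  have hsne : ((x0, ((j0:ℕ) : ZMod n)) : V n).1 ≠ ((flip j0 x0, ((j0:ℕ) : ZMod n)) : V n).1 :=
    Ne.symm (flip_ne j0 x0)
  obtain ⟨he1, he2⟩ := adj_strings_ne hadj0 hsne
  have hcube := cube_case hn3 he1 he2
  have hcval : c = n * 2 ^ (n - 1) := by
    have h1 := (hcc _ _ hadj0).1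
    have h2 := hcube.1
    omega
  -- a cycle edge has an equidistant vertex
  have hadj1 : (CCC n).Adj ((x0, 0) : V n) (x0, 1) := by
    have := adj_cycle x0 0 (one_ne hn3)
    rwa [zero_add] at this
  obtain ⟨hc1, hc2⟩ := hcc _ _ hadj1
  set u1 : V n := (x0, 0) with hu1
  set v1 : V n := (x0, 1) with hv1
  set z : V n := (x0, (((n+1)/2 : ℕ) : ZMod n)) with hz
  have hzeq : (CCC n).dist z u1 = (CCC n).dist z v1 := odd_equidistant hn3 hodd x0
  set W1 := {w : V n | (CCC n).dist w u1 < (CCC n).dist w v1} with hW1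
  set W2 := {w : V n | (CCC n).dist w v1 < (CCC n).dist w u1} with hW2
  have hdisj : Disjoint W1 W2 := by
    rw [Set.disjoint_left]
    intro w hw1 hw2
    simp only [hW1, hW2, Set.mem_setOf_eq] at hw1 hw2
    omega
  have hzni : z ∉ W1 ∪ W2 := by
    simp only [Set.mem_union, hW1, hW2, Set.mem_setOf_eq, hzeq]
    omega
  have hss : W1 ∪ W2 ⊂ Set.univ := by
    rw [Set.ssubset_univ_iff]
    intro hh
    exact hzni (hh ▸ Set.mem_univ z)
  have hlt : (W1 ∪ W2).ncard < Nat.card (V n) := by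
    have := Set.ncard_lt_ncard hss (Set.toFinite _)
    rwa [Set.ncard_univ] at this
  rw [Set.ncard_union_eq hdisj (Set.toFinite _) (Set.toFinite _)] at hlt
  rw [← Nat.card_coe_set_eq, ← Nat.card_coe_set_eq] at hlt
  have e1 : Nat.card W1 = c := hc1
  have e2 : Nat.card W2 = c := hc2
  rw [e1, e2, card_V, hcval] at hlt
  have hpow : 2 ^ n = 2 ^ (n - 1) * 2 := by
    rw [← pow_succ, Nat.sub_add_cancel (by omega : 1 ≤ n)]
  rw [hpow] at hlt
  nlinarith [hlt]

end CCCNDB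

/-- CCC_n is nicely distance-balanced iff n is even, and when n is even the common value is n * 2^(n-1). -/
theorem CCC_nicelyDistanceBalanced_iff (n : ℕ) (hn : 3 ≤ n) :
    ((∃ c : ℕ, ∀ u v : (Fin n → Bool) × ZMod n, (CCC n).Adj u v →
        Nat.card {z : (Fin n → Bool) × ZMod n | (CCC n).dist z u < (CCC n).dist z v} = c ∧
        Nat.card {z : (Fin n → Bool) × ZMod n | (CCC n).dist z v < (CCC n).dist z u} = c)
      ↔ Even n) ∧
    (Even n → ∀ u v : (Fin n → Bool) × ZMod n, (CCC n).Adj u v →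
        Nat.card {z : (Fin n → Bool) × ZMod n | (CCC n).dist z u < (CCC n).dist z v}
          = n * 2 ^ (n - 1) ∧
        Nat.card {z : (Fin n → Bool) × ZMod n | (CCC n).dist z v < (CCC n).dist z u}
          = n * 2 ^ (n - 1)) := by
  haveI : NeZero n := ⟨by omega⟩
  have hevd : Even n ↔ 2 ∣ n := by
    constructor
    · rintro ⟨k, hk⟩; exact ⟨k, by omega⟩
    · rintro ⟨k, hk⟩; exact ⟨k, by omega⟩
  constructor
  · constructor
    · intro hc
      by_contra hne
      exact CCCNDB.main_odd hn (fun hd => hne (hevd.mpr hd)) hc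
    · intro he
      exact ⟨n * 2 ^ (n - 1), fun u v h => CCCNDB.main_even hn (hevd.mp he) u v h⟩
  · intro he u v h
    exact CCCNDB.main_even hn (hevd.mp he) u v h
end

section
/- If n is odd, the cube-connected cycles graph CCC_n is not distance-regular. -/
namespace CCCAux

set_option linter.unusedSectionVars false

variable {n : ℕ}

section
variable [NeZero n]

/-- cycle pseudo-distance on ZMod n -/
def del (a b : ZMod n) : ℕ := min (b - a).val (a - b).val

lemma cast_val_eq (k : ZMod n) : ((k.val : ℕ) : ZMod n) = k :=
  (ZMod.natCast_val k).trans (ZMod.cast_id n k)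

lemma val_neg_of_ne (d : ZMod n) (hd : d ≠ 0) : (-d).val = n - d.val := by
  have h1 : -d = ((n - d.val : ℕ) : ZMod n) := by
    rw [Nat.cast_sub d.val_lt.le, ZMod.natCast_self, cast_val_eq, zero_sub]
  have h2 : d.val ≠ 0 := by simpa [ZMod.val_eq_zero] using hd
  have h3 : d.val < n := d.val_lt
  rw [h1, ZMod.val_cast_of_lt (by omega)]

lemma neg_one_eq : ((-1 : ZMod n)) = ((n - 1 : ℕ) : ZMod n) := by
  rw [Nat.cast_sub (NeZero.one_le), ZMod.natCast_self, Nat.cast_one, zero_sub]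

lemma val_one' (hn : 3 ≤ n) : (1 : ZMod n).val = 1 := by
  have := ZMod.val_cast_of_lt (show 1 < n by omega)
  simpa using this

lemma core (hn : 3 ≤ n) (c : ZMod n) :
    (min c.val (-c).val ≤ min (c - 1).val (-(c - 1)).val + 1) ∧
    (min c.val (-c).val ≤ min (c + 1).val (-(c + 1)).val + 1) := by
  have hvlt : c.val < n := c.val_lt
  have hv1 : (1 : ZMod n).val = 1 := val_one' hn
  constructor
  · by_cases h0 : c = 0
    · simp [h0]
    by_cases h1 : c = 1
    · have : c - 1 = 0 := by rw [h1]; ring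
      simp [this, h1, hv1]
    · have hvc1 : c.val ≠ 1 := fun h => h1 (by rw [← cast_val_eq c, h, Nat.cast_one])
      have hvc0 : c.val ≠ 0 := by simpa [ZMod.val_eq_zero] using h0
      have hsub : c - 1 = ((c.val - 1 : ℕ) : ZMod n) := by
        rw [Nat.cast_sub (by omega), cast_val_eq, Nat.cast_one]
      have hvsub : (c - 1).val = c.val - 1 := by rw [hsub, ZMod.val_cast_of_lt (by omega)]
      have hne : c - 1 ≠ 0 := by rw [sub_ne_zero]; exact h1
      have hnegsub : (-(c - 1)).val = n - (c.val - 1) := by rw [val_neg_of_ne _ hne, hvsub]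
      have hneg : (-c).val = n - c.val := val_neg_of_ne c h0
      rw [hvsub, hnegsub, hneg]
      omega
  · by_cases h0 : c = 0
    · simp [h0]
    by_cases h1 : c = -1
    · have h2 : c + 1 = 0 := by rw [h1]; ring
      have : c.val = n - 1 := by rw [h1, neg_one_eq, ZMod.val_cast_of_lt (by omega)]
      simp [h2, this, h1, neg_neg, hv1]
    · have hvc0 : c.val ≠ 0 := by simpa [ZMod.val_eq_zero] using h0
      have hvcn : c.val ≠ n - 1 := by
        intro h
        exact h1 (by rw [← cast_val_eq c, h, ← neg_one_eq])
      have hadd : c + 1 = ((c.val + 1 : ℕ) : ZMod n) := by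
        rw [Nat.cast_add, cast_val_eq, Nat.cast_one]
      have hvadd : (c + 1).val = c.val + 1 := by rw [hadd, ZMod.val_cast_of_lt (by omega)]
      have hne : c + 1 ≠ 0 := by
        intro h; exact h1 (by linear_combination h)
      have hnegadd : (-(c + 1)).val = n - (c.val + 1) := by rw [val_neg_of_ne _ hne, hvadd]
      have hneg : (-c).val = n - c.val := val_neg_of_ne c h0
      rw [hvadd, hnegadd, hneg]
      omega

lemma del_step (hn : 3 ≤ n) (a b r : ZMod n) (h : r = a + 1 ∨ r = a - 1) :
    del a b ≤ del r b + 1 := by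
  have h1 := core hn (b - a)
  rcases h with h | h <;> subst h <;> unfold del
  · have e1 : b - (a + 1) = (b - a) - 1 := by ring
    have e2 : (a + 1) - b = -((b - a) - 1) := by ring
    have e3 : a - b = -(b - a) := by ring
    rw [e1, e2, e3]; exact h1.1
  · have e1 : b - (a - 1) = (b - a) + 1 := by ring
    have e2 : (a - 1) - b = -((b - a) + 1) := by ring
    have e3 : a - b = -(b - a) := by ring
    rw [e1, e2, e3]; exact h1.2

/-- flip the coordinate at cycle position k -/
def flp (y : Fin n → Bool) (k : ZMod n) : Fin n → Bool :=
  fun i => if ((i : ℕ) : ZMod n) = k then !(y i) else y i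

def ham (y z : Fin n → Bool) : ℕ := (Finset.univ.filter (fun i => y i ≠ z i)).card

lemma cast_fin_inj {i j : Fin n} (h : ((i : ℕ) : ZMod n) = ((j : ℕ) : ZMod n)) : i = j := by
  have hi := ZMod.val_cast_of_lt i.isLt
  have hj := ZMod.val_cast_of_lt j.isLt
  exact Fin.ext (by rw [← hi, ← hj, h])

lemma flp_ne (y : Fin n → Bool) (k : ZMod n) : flp y k ≠ y := by
  intro h
  have := congrFun h ⟨k.val, k.val_lt⟩
  simp [flp, cast_val_eq] at this

lemma ham_ge_one {y z : Fin n → Bool} (i : Fin n) (h : y i ≠ z i) : 1 ≤ ham y z :=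
  Finset.card_pos.mpr ⟨i, Finset.mem_filter.mpr ⟨Finset.mem_univ _, h⟩⟩

lemma ham_ge_two {y z : Fin n → Bool} (i j : Fin n) (hij : i ≠ j)
    (hi : y i ≠ z i) (hj : y j ≠ z j) : 2 ≤ ham y z :=
  Finset.one_lt_card.mpr ⟨i, Finset.mem_filter.mpr ⟨Finset.mem_univ _, hi⟩,
    j, Finset.mem_filter.mpr ⟨Finset.mem_univ _, hj⟩, hij⟩

lemma ham_flp (y : Fin n → Bool) (k : ZMod n) : 1 ≤ ham y (flp y k) :=
  ham_ge_one ⟨k.val, k.val_lt⟩ (by simp [flp, cast_val_eq])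

lemma one_ne_zero_z (hn : 3 ≤ n) : (1 : ZMod n) ≠ 0 := by
  intro h
  have h1 := val_one' hn
  rw [h] at h1; simp at h1

lemma adj_up (hn : 3 ≤ n) (y : Fin n → Bool) (a : ZMod n) : (CCC n).Adj (y, a) (y, a + 1) := by
  rw [CCC, SimpleGraph.fromRel_adj]
  refine ⟨?_, Or.inl (Or.inl ⟨rfl, Or.inl rfl⟩)⟩
  intro h
  have := (Prod.mk.injEq _ _ _ _).mp h
  exact one_ne_zero_z hn (by linear_combination this.2.symm)

lemma adj_down (hn : 3 ≤ n) (y : Fin n → Bool) (a : ZMod n) : (CCC n).Adj (y, a) (y, a - 1) := by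
  rw [CCC, SimpleGraph.fromRel_adj]
  refine ⟨?_, Or.inl (Or.inl ⟨rfl, Or.inr rfl⟩)⟩
  intro h
  have := (Prod.mk.injEq _ _ _ _).mp h
  exact one_ne_zero_z hn (by linear_combination this.2)

lemma adj_flip (y : Fin n → Bool) (k : ZMod n) : (CCC n).Adj (y, k) (flp y k, k) := by
  rw [CCC, SimpleGraph.fromRel_adj]
  constructor
  · intro h
    exact flp_ne y k ((Prod.mk.injEq _ _ _ _).mp h).1.symm
  · refine Or.inl (Or.inr ⟨rfl, fun i => ?_⟩)
    by_cases h : ((i : ℕ) : ZMod n) = k <;> simp [flp, h]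

/-- every neighbor of (y,k) is one of three candidates -/
lemma adj_cases {y : Fin n → Bool} {k : ZMod n} {w : (Fin n → Bool) × ZMod n}
    (h : (CCC n).Adj (y, k) w) :
    w = (y, k + 1) ∨ w = (y, k - 1) ∨ w = (flp y k, k) := by
  obtain ⟨z, l⟩ := w
  rw [CCC, SimpleGraph.fromRel_adj] at h
  obtain ⟨hne, h | h⟩ := h <;>
    rcases h with ⟨h1, h2 | h2⟩ | ⟨h1, h2⟩ <;> simp only [Prod.mk.injEq] at h1 h2 ⊢
  · exact Or.inl ⟨h1.symm, h2⟩
  · exact Or.inr (Or.inl ⟨h1.symm, h2⟩)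
  · refine Or.inr (Or.inr ⟨?_, h1.symm⟩)
    funext i
    by_cases hc : ((i : ℕ) : ZMod n) = k
    · have := (h2 i).mpr hc
      simp only [flp, hc, if_pos]
      cases hz : z i <;> cases hy : y i <;> simp_all
    · have : ¬ (y i ≠ z i) := fun hh => hc ((h2 i).mp hh)
      simp only [not_not] at this
      simp [flp, hc, this]
  · exact Or.inr (Or.inl ⟨h1, by rw [h2]; ring⟩)
  · exact Or.inl ⟨h1, by rw [h2]; ring⟩
  · subst h1
    refine Or.inr (Or.inr ⟨?_, rfl⟩)
    funext i
    by_cases hc : ((i : ℕ) : ZMod n) = l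
    · have := (h2 i).mpr hc
      simp only [flp, hc, if_pos]
      cases hz : z i <;> cases hy : y i <;> simp_all
    · have : ¬ (z i ≠ y i) := fun hh => hc ((h2 i).mp hh)
      simp only [not_not] at this
      simp [flp, hc, this]

/-- fundamental lower bound: any walk has length at least cycle-distance plus
Hamming distance of the endpoints. -/
lemma walk_bound (hn : 3 ≤ n) {p q : (Fin n → Bool) × ZMod n} (w : (CCC n).Walk p q) :
    del p.2 q.2 + ham p.1 q.1 ≤ w.length := by
  induction w with
  | nil => simp [del, ham]
  | @cons p r q h w ih =>
    rw [SimpleGraph.Walk.length_cons]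
    have hstep : (p.1 = r.1 ∧ (r.2 = p.2 + 1 ∨ r.2 = p.2 - 1)) ∨
        (p.2 = r.2 ∧ ∀ i : Fin n, ((i : ℕ) : ZMod n) ≠ p.2 → p.1 i = r.1 i) := by
      rw [CCC, SimpleGraph.fromRel_adj] at h
      rcases h.2 with (⟨h1, h2⟩ | ⟨h1, h2⟩) | (⟨h1, h2⟩ | ⟨h1, h2⟩)
      · exact Or.inl ⟨h1, h2⟩
      · exact Or.inr ⟨h1, fun i hi => by_contra fun hne => hi ((h2 i).mp hne)⟩
      · refine Or.inl ⟨h1.symm, ?_⟩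
        rcases h2 with h2 | h2
        · exact Or.inr (by rw [h2]; ring)
        · exact Or.inl (by rw [h2]; ring)
      · refine Or.inr ⟨h1.symm, fun i hi => ?_⟩
        by_contra hne
        refine hi ?_
        rw [← h1]
        exact (h2 i).mp (Ne.symm hne)
    rcases hstep with ⟨h1, h2⟩ | ⟨h1, h2⟩
    · have hham : ham p.1 q.1 = ham r.1 q.1 := by rw [ham, ham, h1]
      have hdel := del_step hn p.2 q.2 r.2 h2
      omega
    · have hdel : del p.2 q.2 = del r.2 q.2 := by rw [h1]
      have hham : ham p.1 q.1 ≤ ham r.1 q.1 + 1 := by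
        have hsub : (Finset.univ.filter (fun i => p.1 i ≠ q.1 i)) ⊆
            insert ⟨(p.2).val, (p.2).val_lt⟩
              (Finset.univ.filter (fun i => r.1 i ≠ q.1 i)) := by
          intro i hi
          rw [Finset.mem_filter] at hi
          rcases eq_or_ne i ⟨(p.2).val, (p.2).val_lt⟩ with he | he
          · rw [he]; exact Finset.mem_insert_self _ _
          · have hc : ((i : ℕ) : ZMod n) ≠ p.2 := by
              intro hc
              exact he (cast_fin_inj (by rw [hc]; exact (cast_val_eq p.2).symm))
            have heq := h2 i hc
            exact Finset.mem_insert_of_mem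
              (Finset.mem_filter.mpr ⟨Finset.mem_univ _, heq ▸ hi.2⟩)
        calc ham p.1 q.1 ≤ _ := Finset.card_le_card hsub
          _ ≤ ham r.1 q.1 + 1 := Finset.card_insert_le _ _
      omega

/-- explicit walks going up the cycle -/
lemma walk_up (hn : 3 ≤ n) (y : Fin n → Bool) :
    ∀ (j : ℕ) (a : ZMod n), ∃ w : (CCC n).Walk (y, a) (y, a + (j : ℕ)), w.length = j := by
  intro j
  induction j with
  | zero => exact fun a => ⟨SimpleGraph.Walk.nil.copy rfl (by simp), by simp⟩
  | succ j ih =>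
    intro a
    obtain ⟨w, hw⟩ := ih (a + 1)
    have he : ((y, (a + 1) + (j : ℕ)) : (Fin n → Bool) × ZMod n)
        = (y, a + ((j + 1 : ℕ) : ZMod n)) := by
      rw [show ((a + 1) + (j : ℕ) : ZMod n) = a + ((j + 1 : ℕ) : ZMod n) from by push_cast; ring]
    exact ⟨(SimpleGraph.Walk.cons (adj_up hn y a) w).copy rfl he, by simp [hw]⟩

/-- explicit walks going down the cycle -/
lemma walk_down (hn : 3 ≤ n) (y : Fin n → Bool) :
    ∀ (j : ℕ) (a : ZMod n), ∃ w : (CCC n).Walk (y, a) (y, a - (j : ℕ)), w.length = j := by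
  intro j
  induction j with
  | zero => exact fun a => ⟨SimpleGraph.Walk.nil.copy rfl (by simp), by simp⟩
  | succ j ih =>
    intro a
    obtain ⟨w, hw⟩ := ih (a - 1)
    have he : ((y, (a - 1) - (j : ℕ)) : (Fin n → Bool) × ZMod n)
        = (y, a - ((j + 1 : ℕ) : ZMod n)) := by
      rw [show ((a - 1) - (j : ℕ) : ZMod n) = a - ((j + 1 : ℕ) : ZMod n) from by push_cast; ring]
    exact ⟨(SimpleGraph.Walk.cons (adj_down hn y a) w).copy rfl he, by simp [hw]⟩

end


section concrete
variable [NeZero n] {M : ℕ}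

lemma hvM (hn : 3 ≤ n) (hM : n = 2 * M + 1) : (((M : ℕ) : ZMod n)).val = M :=
  ZMod.val_cast_of_lt (by omega)

lemma hMne0 (hn : 3 ≤ n) (hM : n = 2 * M + 1) : ((M : ℕ) : ZMod n) ≠ 0 := fun h => by
  have := hvM hn hM; rw [h, ZMod.val_zero] at this; omega

lemma hnegM (hn : 3 ≤ n) (hM : n = 2 * M + 1) :
    -((M : ℕ) : ZMod n) = ((M : ℕ) : ZMod n) + 1 := by
  have h2 : ((2 * M + 1 : ℕ) : ZMod n) = 0 := by rw [← hM]; exact ZMod.natCast_self n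
  push_cast at h2
  linear_combination -h2

lemma hvM1 (hn : 3 ≤ n) (hM : n = 2 * M + 1) : (((M : ℕ) : ZMod n) + 1).val = M + 1 := by
  rw [show ((M : ℕ) : ZMod n) + 1 = ((M + 1 : ℕ) : ZMod n) from by push_cast; ring]
  exact ZMod.val_cast_of_lt (by omega)

lemma hM1ne0 (hn : 3 ≤ n) (hM : n = 2 * M + 1) : ((M : ℕ) : ZMod n) + 1 ≠ 0 := fun h => by
  have := hvM1 hn hM; rw [h, ZMod.val_zero] at this; omega

lemma hsubeq (hM1 : 1 ≤ M) : ((M : ℕ) : ZMod n) - 1 = ((M - 1 : ℕ) : ZMod n) := by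
  rw [Nat.cast_sub hM1]; push_cast; ring

lemma hvMm1 (hn : 3 ≤ n) (hM : n = 2 * M + 1) : (((M : ℕ) : ZMod n) - 1).val = M - 1 := by
  rw [hsubeq (by omega)]; exact ZMod.val_cast_of_lt (by omega)

lemma hdelM (hn : 3 ≤ n) (hM : n = 2 * M + 1) : del (0 : ZMod n) ((M : ℕ) : ZMod n) = M := by
  unfold del
  rw [sub_zero, zero_sub, hnegM hn hM, hvM hn hM, hvM1 hn hM]
  omega

lemma hdelM1 (hn : 3 ≤ n) (hM : n = 2 * M + 1) :
    del (0 : ZMod n) (((M : ℕ) : ZMod n) + 1) = M := by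
  unfold del
  rw [sub_zero, zero_sub,
    show -(((M : ℕ) : ZMod n) + 1) = ((M : ℕ) : ZMod n) from by linear_combination hnegM hn hM,
    hvM hn hM, hvM1 hn hM]
  omega

lemma hdelMm1 (hn : 3 ≤ n) (hM : n = 2 * M + 1) :
    M - 1 ≤ del (0 : ZMod n) (((M : ℕ) : ZMod n) - 1) := by
  unfold del
  rw [sub_zero, zero_sub, hvMm1 hn hM]
  by_cases h1 : M = 1
  · omega
  · have hne : ((M : ℕ) : ZMod n) - 1 ≠ 0 := fun h => by
      have := hvMm1 hn hM; rw [h, ZMod.val_zero] at this; omega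
    rw [val_neg_of_ne _ hne, hvMm1 hn hM]
    omega

lemma hamxx (x : Fin n → Bool) : ham x x = 0 := by simp [ham]

lemma dF1 (hn : 3 ≤ n) (hM : n = 2 * M + 1) (x : Fin n → Bool) :
    (CCC n).dist (x, (0 : ZMod n)) (x, ((M : ℕ) : ZMod n)) = M := by
  obtain ⟨wM, hwM⟩ := walk_up hn x M (0 : ZMod n)
  have hcp : ((x, (0 : ZMod n) + ((M : ℕ) : ZMod n)) : (Fin n → Bool) × ZMod n)
      = (x, ((M : ℕ) : ZMod n)) := by rw [zero_add]
  apply le_antisymm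
  · have := SimpleGraph.dist_le (wM.copy rfl hcp)
    rwa [SimpleGraph.Walk.length_copy, hwM] at this
  · have hne : (CCC n).dist (x, (0 : ZMod n)) (x, ((M : ℕ) : ZMod n)) ≠ 0 := by
      rw [SimpleGraph.dist_ne_zero_iff_ne_and_reachable]
      exact ⟨fun h => hMne0 hn hM (congrArg Prod.snd h).symm, ⟨wM.copy rfl hcp⟩⟩
    obtain ⟨w', hw'⟩ := SimpleGraph.exists_walk_of_dist_ne_zero hne
    have hb : del (0 : ZMod n) ((M : ℕ) : ZMod n) + ham x x ≤ w'.length := walk_bound hn w'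
    rw [hw', hdelM hn hM, hamxx] at hb
    omega

lemma dF3 (hn : 3 ≤ n) (hM : n = 2 * M + 1) (x : Fin n → Bool) :
    (CCC n).dist (x, (0 : ZMod n)) (x, ((M : ℕ) : ZMod n) + 1) = M := by
  obtain ⟨wD, hwD⟩ := walk_down hn x M (0 : ZMod n)
  have hcp : ((x, (0 : ZMod n) - ((M : ℕ) : ZMod n)) : (Fin n → Bool) × ZMod n)
      = (x, ((M : ℕ) : ZMod n) + 1) := by rw [zero_sub, hnegM hn hM]
  apply le_antisymm
  · have := SimpleGraph.dist_le (wD.copy rfl hcp)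
    rwa [SimpleGraph.Walk.length_copy, hwD] at this
  · have hne : (CCC n).dist (x, (0 : ZMod n)) (x, ((M : ℕ) : ZMod n) + 1) ≠ 0 := by
      rw [SimpleGraph.dist_ne_zero_iff_ne_and_reachable]
      exact ⟨fun h => hM1ne0 hn hM (congrArg Prod.snd h).symm, ⟨wD.copy rfl hcp⟩⟩
    obtain ⟨w', hw'⟩ := SimpleGraph.exists_walk_of_dist_ne_zero hne
    have hb : del (0 : ZMod n) (((M : ℕ) : ZMod n) + 1) + ham x x ≤ w'.length := walk_bound hn w'
    rw [hw', hdelM1 hn hM, hamxx] at hb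
    omega

lemma dF2 (hn : 3 ≤ n) (hM : n = 2 * M + 1) (x : Fin n → Bool) :
    (CCC n).dist (x, (0 : ZMod n)) (flp x 0, ((M : ℕ) : ZMod n) - 1) = M := by
  obtain ⟨wU, hwU⟩ := walk_up hn (flp x 0) (M - 1) (0 : ZMod n)
  have hcp : ((flp x 0, (0 : ZMod n) + ((M - 1 : ℕ) : ZMod n)) : (Fin n → Bool) × ZMod n)
      = (flp x 0, ((M : ℕ) : ZMod n) - 1) := by rw [zero_add, ← hsubeq (by omega)]
  apply le_antisymm
  · have := SimpleGraph.dist_le ((SimpleGraph.Walk.cons (adj_flip x 0) wU).copy rfl hcp)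
    rw [SimpleGraph.Walk.length_copy, SimpleGraph.Walk.length_cons, hwU] at this
    omega
  · have hne : (CCC n).dist (x, (0 : ZMod n)) (flp x 0, ((M : ℕ) : ZMod n) - 1) ≠ 0 := by
      rw [SimpleGraph.dist_ne_zero_iff_ne_and_reachable]
      exact ⟨fun h => flp_ne x 0 ((congrArg Prod.fst h)).symm,
        ⟨(SimpleGraph.Walk.cons (adj_flip x 0) wU).copy rfl hcp⟩⟩
    obtain ⟨w', hw'⟩ := SimpleGraph.exists_walk_of_dist_ne_zero hne
    have hb : del (0 : ZMod n) (((M : ℕ) : ZMod n) - 1) + ham x (flp x 0) ≤ w'.length :=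
      walk_bound hn w'
    have h1 := ham_flp x (0 : ZMod n)
    have h2 := hdelMm1 hn hM
    rw [hw'] at hb
    omega

lemma dE1 (hn : 3 ≤ n) (hM : n = 2 * M + 1) (x : Fin n → Bool) :
    (CCC n).dist (x, (0 : ZMod n)) (x, ((M : ℕ) : ZMod n) - 1) ≤ M - 1 := by
  obtain ⟨w, hw⟩ := walk_up hn x (M - 1) (0 : ZMod n)
  have hcp : ((x, (0 : ZMod n) + ((M - 1 : ℕ) : ZMod n)) : (Fin n → Bool) × ZMod n)
      = (x, ((M : ℕ) : ZMod n) - 1) := by rw [zero_add, ← hsubeq (by omega)]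
  have := SimpleGraph.dist_le (w.copy rfl hcp)
  rwa [SimpleGraph.Walk.length_copy, hw] at this

lemma dE2 (hn : 3 ≤ n) (hM : n = 2 * M + 1) (x : Fin n → Bool) :
    (CCC n).dist (x, (0 : ZMod n)) (flp x ((M : ℕ) : ZMod n), ((M : ℕ) : ZMod n)) ≠ M := by
  intro h
  have hne : (CCC n).dist (x, (0 : ZMod n)) (flp x ((M : ℕ) : ZMod n), ((M : ℕ) : ZMod n)) ≠ 0 :=
    by rw [h]; omega
  obtain ⟨w', hw'⟩ := SimpleGraph.exists_walk_of_dist_ne_zero hne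
  have hb : del (0 : ZMod n) ((M : ℕ) : ZMod n) + ham x (flp x ((M : ℕ) : ZMod n)) ≤ w'.length :=
    walk_bound hn w'
  have h1 := ham_flp x (((M : ℕ) : ZMod n))
  rw [hw', h, hdelM hn hM] at hb
  omega

lemma dE3 (hn : 3 ≤ n) (hM : n = 2 * M + 1) (x : Fin n → Bool) :
    (CCC n).dist (x, (0 : ZMod n)) (flp x 0, ((M : ℕ) : ZMod n)) ≠ M := by
  intro h
  have hne : (CCC n).dist (x, (0 : ZMod n)) (flp x 0, ((M : ℕ) : ZMod n)) ≠ 0 := by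
    rw [h]; omega
  obtain ⟨w', hw'⟩ := SimpleGraph.exists_walk_of_dist_ne_zero hne
  have hb : del (0 : ZMod n) ((M : ℕ) : ZMod n) + ham x (flp x 0) ≤ w'.length := walk_bound hn w'
  have h1 := ham_flp x (0 : ZMod n)
  rw [hw', h, hdelM hn hM] at hb
  omega

lemma dE4 (hn : 3 ≤ n) (hM : n = 2 * M + 1) (x : Fin n → Bool) :
    (CCC n).dist (x, (0 : ZMod n)) (flp x 0, ((M : ℕ) : ZMod n) - 1 - 1) ≠ M := by
  by_cases hM2 : 2 ≤ M
  · intro h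
    obtain ⟨w, hw⟩ := walk_up hn (flp x 0) (M - 2) (0 : ZMod n)
    have hcp : ((flp x 0, (0 : ZMod n) + ((M - 2 : ℕ) : ZMod n)) : (Fin n → Bool) × ZMod n)
        = (flp x 0, ((M : ℕ) : ZMod n) - 1 - 1) := by
      rw [zero_add, show ((M - 2 : ℕ) : ZMod n) = ((M : ℕ) : ZMod n) - 1 - 1 from by
        rw [Nat.cast_sub hM2]; push_cast; ring]
    have := SimpleGraph.dist_le ((SimpleGraph.Walk.cons (adj_flip x 0) w).copy rfl hcp)
    rw [SimpleGraph.Walk.length_copy, SimpleGraph.Walk.length_cons, hw, h] at this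
    omega
  · have hMeq : M = 1 := by omega
    intro h
    have hpos : ((M : ℕ) : ZMod n) - 1 - 1 = -1 := by rw [hMeq, Nat.cast_one]; ring
    have hne : (CCC n).dist (x, (0 : ZMod n)) (flp x 0, ((M : ℕ) : ZMod n) - 1 - 1) ≠ 0 := by
      rw [h]; omega
    obtain ⟨w', hw'⟩ := SimpleGraph.exists_walk_of_dist_ne_zero hne
    have hb : del (0 : ZMod n) (((M : ℕ) : ZMod n) - 1 - 1) + ham x (flp x 0) ≤ w'.length :=
      walk_bound hn w'
    have h1 := ham_flp x (0 : ZMod n)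
    have hdel : del (0 : ZMod n) (((M : ℕ) : ZMod n) - 1 - 1) = 1 := by
      unfold del
      rw [sub_zero, zero_sub, hpos, neg_neg, val_one' hn,
        val_neg_of_ne 1 (one_ne_zero_z hn), val_one' hn]
      omega
    rw [hw', h, hdel, hMeq] at hb
    omega

lemma dE5 (hn : 3 ≤ n) (hM : n = 2 * M + 1) (x : Fin n → Bool) :
    (CCC n).dist (x, (0 : ZMod n))
      (flp (flp x 0) (((M : ℕ) : ZMod n) - 1), ((M : ℕ) : ZMod n) - 1) ≠ M := by
  by_cases hM2 : 2 ≤ M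
  · intro h
    have hne : (CCC n).dist (x, (0 : ZMod n))
        (flp (flp x 0) (((M : ℕ) : ZMod n) - 1), ((M : ℕ) : ZMod n) - 1) ≠ 0 := by
      rw [h]; omega
    obtain ⟨w', hw'⟩ := SimpleGraph.exists_walk_of_dist_ne_zero hne
    have hb : del (0 : ZMod n) (((M : ℕ) : ZMod n) - 1)
        + ham x (flp (flp x 0) (((M : ℕ) : ZMod n) - 1)) ≤ w'.length := walk_bound hn w'
    have hne10 : ((M : ℕ) : ZMod n) - 1 ≠ 0 := fun hc => by
      have := hvMm1 hn hM; rw [hc, ZMod.val_zero] at this; omega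
    have hi0 : ((((⟨0, by omega⟩ : Fin n) : ℕ)) : ZMod n) = 0 := by norm_num
    have hi1 : ((((⟨M - 1, by omega⟩ : Fin n) : ℕ)) : ZMod n) = ((M : ℕ) : ZMod n) - 1 :=
      (hsubeq (by omega)).symm
    have hd0 : x ⟨0, by omega⟩ ≠ flp (flp x 0) (((M : ℕ) : ZMod n) - 1) ⟨0, by omega⟩ := by
      simp [flp, hi0, Ne.symm hne10]
    have hd1 : x ⟨M - 1, by omega⟩
        ≠ flp (flp x 0) (((M : ℕ) : ZMod n) - 1) ⟨M - 1, by omega⟩ := by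
      simp [flp, hi1, hne10]
    have h2 : 2 ≤ ham x (flp (flp x 0) (((M : ℕ) : ZMod n) - 1)) :=
      ham_ge_two _ _ (by simp only [ne_eq, Fin.mk.injEq]; omega) hd0 hd1
    have h3 := hdelMm1 hn hM
    rw [hw', h] at hb
    omega
  · have hMeq : M = 1 := by omega
    have h0 : ((M : ℕ) : ZMod n) - 1 = 0 := by rw [hMeq, Nat.cast_one]; ring
    have hfl : flp (flp x 0) ((0 : ZMod n)) = x := by
      funext i
      by_cases hh : ((i : ℕ) : ZMod n) = 0 <;> simp [flp, hh]
    rw [h0, hfl, SimpleGraph.dist_self]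
    omega

end concrete


end CCCAux



open CCCAux SimpleGraph in
/-- for odd n ≥ 3, CCC_n is not distance-regular: there is no function f such that the number of vertices at distance i from u and j from v depends only on i, j, d(u,v). -/
theorem CCC_odd_not_distanceRegular (n : ℕ) (hn : 3 ≤ n) (hodd : Odd n) :
    ¬ ∃ f : ℕ → ℕ → ℕ → ℕ, ∀ (u v : (Fin n → Bool) × ZMod n) (i j : ℕ),
        Nat.card {w : (Fin n → Bool) × ZMod n |
            (CCC n).dist u w = i ∧ (CCC n).dist v w = j}
          = f i j ((CCC n).dist u v) := by
  rintro ⟨f, hf⟩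
  haveI : NeZero n := ⟨by omega⟩
  obtain ⟨M, hM⟩ : ∃ m, n = 2 * m + 1 := by
    obtain ⟨m, hm⟩ := hodd; exact ⟨m, by omega⟩
  have hM1 : 1 ≤ M := by omega
  set x : Fin n → Bool := fun _ => false with hxdef
  have hS1 : {w : (Fin n → Bool) × ZMod n |
      (CCC n).dist (x, ((M : ℕ) : ZMod n)) w = 1 ∧ (CCC n).dist (x, (0 : ZMod n)) w = M}
      = {(x, ((M : ℕ) : ZMod n) + 1)} := by
    ext w
    simp only [Set.mem_setOf_eq, Set.mem_singleton_iff]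
    constructor
    · rintro ⟨h1, h2⟩
      have hadj := SimpleGraph.dist_eq_one_iff_adj.mp h1
      rcases adj_cases hadj with h | h | h
      · exact h
      · exfalso
        rw [h] at h2
        have := dE1 hn hM x
        omega
      · exfalso; rw [h] at h2; exact dE2 hn hM x h2
    · rintro rfl
      exact ⟨SimpleGraph.dist_eq_one_iff_adj.mpr (adj_up hn x _), dF3 hn hM x⟩
  have hS2 : {w : (Fin n → Bool) × ZMod n |
      (CCC n).dist (flp x 0, ((M : ℕ) : ZMod n) - 1) w = 1
        ∧ (CCC n).dist (x, (0 : ZMod n)) w = M}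
      = (∅ : Set ((Fin n → Bool) × ZMod n)) := by
    ext w
    simp only [Set.mem_setOf_eq, Set.mem_empty_iff_false, iff_false, not_and]
    intro h1 h2
    have hadj := SimpleGraph.dist_eq_one_iff_adj.mp h1
    rcases adj_cases hadj with h | h | h
    · rw [show ((M : ℕ) : ZMod n) - 1 + 1 = ((M : ℕ) : ZMod n) from by ring] at h
      rw [h] at h2; exact dE3 hn hM x h2
    · rw [h] at h2; exact dE4 hn hM x h2
    · rw [h] at h2; exact dE5 hn hM x h2
  have hd1 : (CCC n).dist (x, ((M : ℕ) : ZMod n)) (x, (0 : ZMod n)) = M := by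
    rw [SimpleGraph.dist_comm]; exact dF1 hn hM x
  have hd2 : (CCC n).dist (flp x 0, ((M : ℕ) : ZMod n) - 1) (x, (0 : ZMod n)) = M := by
    rw [SimpleGraph.dist_comm]; exact dF2 hn hM x
  have h1 := hf (x, ((M : ℕ) : ZMod n)) (x, (0 : ZMod n)) 1 M
  have h2 := hf (flp x 0, ((M : ℕ) : ZMod n) - 1) (x, (0 : ZMod n)) 1 M
  rw [hS1, hd1] at h1
  rw [hS2, hd2] at h2
  simp only [Nat.card_coe_set_eq, Set.ncard_singleton, Set.ncard_empty] at h1 h2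
  omega
end
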